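/- arXiv:2408.02618 — 8 statements merged into one kernel-verified Lean document; each statement's English description precedes it below -/
import Mathlib

section
/- The \mathbb{C}[\hbar]-submodule of (D_\hbar(\mathbb{C}^*) \otimes \mathfrak{gl}_K) \otimes_{\mathbb{C}[\hbar]} \mathbb{C}[\hbar^{\pm1}] spanned by the elements T_{k,a}(X) = z^k D^a \otimes X for k \in \mathbb{Z}, a \ge 0, X \in \mathfrak{gl}_K, together with the elements t_{k,a} = T_{k,a}(\mathrm{Id})/\hbar, is closed under the commutator bracket, i.e. forms a Lie subalgebra. -/
open Matrix

/-- The `ℂ[ħ]`-submodule of `(D_ħ(ℂ*) ⊗ gl_K)[ħ⁻¹]` spanned by the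
elements `T_{k,a}(X) = z^k D^a ⊗ X` (together with all their `ħ^c`-multiples, which is
the same as taking the `ℂ[ħ]`-span) and the elements `t_{k,a} = T_{k,a}(Id)/ħ` is closed
under the commutator bracket, i.e. forms a Lie subalgebra.  Here the ambient algebra is
modelled abstractly: `A` is any ring containing `z, z⁻¹, D` with `D z = z (D + ħ)`,
with `ħ` central and invertible (we are in the localization at `ħ`), and the matrix
algebra is `Matrix (Fin K) (Fin K) A`. -/
theorem stmt_1 {A : Type*} [Ring A] [Algebra ℂ A] (K : ℕ)
    (z zinv D h hinv : A)
    (hrel : D * z = z * (D + h))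
    (hz1 : z * zinv = 1) (hz2 : zinv * z = 1)
    (hcentral : ∀ x : A, h * x = x * h)
    (hh1 : h * hinv = 1) (hh2 : hinv * h = 1)
    (Z : ℤ → A)
    (hZ : ∀ m : ℤ, Z m = if 0 ≤ m then z ^ m.toNat else zinv ^ (-m).toNat)
    (T : ℕ → ℤ → ℕ → Matrix (Fin K) (Fin K) ℂ → Matrix (Fin K) (Fin K) A)
    (hT : ∀ c k a X i j, T c k a X i j = h ^ c * Z k * D ^ a * algebraMap ℂ A (X i j))
    (t : ℤ → ℕ → Matrix (Fin K) (Fin K) A)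
    (ht : ∀ k a i j, t k a i j = if i = j then hinv * Z k * D ^ a else 0) :
    ∀ x ∈ Submodule.span ℂ
        ({M : Matrix (Fin K) (Fin K) A | ∃ c k a X, M = T c k a X} ∪
         {M : Matrix (Fin K) (Fin K) A | ∃ k a, M = t k a}),
      ∀ y ∈ Submodule.span ℂ
        ({M : Matrix (Fin K) (Fin K) A | ∃ c k a X, M = T c k a X} ∪
         {M : Matrix (Fin K) (Fin K) A | ∃ k a, M = t k a}),
        x * y - y * x ∈ Submodule.span ℂ
          ({M : Matrix (Fin K) (Fin K) A | ∃ c k a X, M = T c k a X} ∪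
           {M : Matrix (Fin K) (Fin K) A | ∃ k a, M = t k a}) := by
  set gen : Set (Matrix (Fin K) (Fin K) A) :=
    ({M : Matrix (Fin K) (Fin K) A | ∃ c k a X, M = T c k a X} ∪
     {M : Matrix (Fin K) (Fin K) A | ∃ k a, M = t k a}) with hgen
  set S : Submodule ℂ (Matrix (Fin K) (Fin K) A) := Submodule.span ℂ gen with hSdef
  let u : Aˣ := ⟨z, zinv, hz1, hz2⟩
  let v : Aˣ := ⟨h, hinv, hh1, hh2⟩
  have hZu : ∀ m : ℤ, Z m = ((u ^ m : Aˣ) : A) := by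
    intro m
    rw [hZ]
    rcases le_or_gt 0 m with hm | hm
    · rw [if_pos hm]
      conv_rhs => rw [show m = (m.toNat : ℤ) from (Int.toNat_of_nonneg hm).symm]
      rw [zpow_natCast, Units.val_pow_eq_pow_val]
    · rw [if_neg (not_le.mpr hm)]
      conv_rhs => rw [show m = -((-m).toNat : ℤ) by omega]
      rw [_root_.zpow_neg, zpow_natCast, ← inv_pow, Units.val_pow_eq_pow_val]
      rfl
  let H : ℤ → A := fun m => ((v ^ m : Aˣ) : A)
  have hHnat : ∀ n : ℕ, H (n : ℤ) = h ^ n := by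
    intro n
    show ((v ^ (n : ℤ) : Aˣ) : A) = h ^ n
    rw [zpow_natCast, Units.val_pow_eq_pow_val]
  have hHneg1 : H (-1) = hinv := by
    show ((v ^ (-1 : ℤ) : Aˣ) : A) = hinv
    rw [_root_.zpow_neg, zpow_one]
    rfl
  have hHmul : ∀ m n : ℤ, H m * H n = H (m + n) := by
    intro m n
    show ((v ^ m : Aˣ) : A) * ((v ^ n : Aˣ) : A) = ((v ^ (m + n) : Aˣ) : A)
    rw [← Units.val_mul, ← _root_.zpow_add]
  have CH : ∀ (m : ℤ) (x : A), Commute x (H m) := by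
    intro m x
    have hv : Commute x (v : A) := (hcentral x).symm
    exact hv.units_zpow_right m
  have hZmul : ∀ k l : ℤ, Z k * Z l = Z (k + l) := by
    intro k l
    rw [hZu, hZu, hZu, ← Units.val_mul, ← _root_.zpow_add]
  have hZ0 : Z 0 = 1 := by rw [hZu]; simp
  have hZ1 : Z 1 = z := by rw [hZu]; simp; rfl
  have hZn1 : Z (-1) = zinv := by
    rw [hZu, _root_.zpow_neg, zpow_one]; rfl
  have hDzinv : D * zinv = zinv * (D - h) := by
    have e1 : z * D * zinv = D - h := by
      have e0 : z * D * zinv + h = D := by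
        have e : D * (z * zinv) = (z * D + z * h) * zinv := by
          rw [← mul_assoc, hrel, mul_add]
        rw [hz1, mul_one, add_mul] at e
        have hzh : z * h * zinv = h := by
          rw [← hcentral z, mul_assoc, hz1, mul_one]
        rw [hzh] at e
        exact e.symm
      exact eq_sub_of_add_eq e0
    calc D * zinv = zinv * z * (D * zinv) := by rw [hz2, one_mul]
      _ = zinv * (z * D * zinv) := by simp only [mul_assoc]
      _ = zinv * (D - h) := by rw [e1]
  have hDZ : ∀ k : ℤ, D * Z k = Z k * (D + k • h) := by
    intro k
    induction k using Int.induction_on with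
    | zero => simp [hZ0]
    | succ n ih =>
      have hsplit : Z ((n : ℤ) + 1) = Z n * z := by rw [← hZ1, hZmul]
      rw [hsplit, ← mul_assoc, ih, mul_assoc, mul_assoc]
      congr 1
      rw [add_mul, smul_mul_assoc, hrel, hcentral z, ← mul_smul_comm, ← mul_add]
      congr 1
      rw [add_smul, one_smul]
      abel
    | pred n ih =>
      have hsplit : Z (-(n : ℤ) - 1) = Z (-n) * zinv := by
        rw [← hZn1, hZmul]; ring_nf
      rw [hsplit, ← mul_assoc, ih, mul_assoc, mul_assoc]
      congr 1
      rw [add_mul, smul_mul_assoc, hDzinv, hcentral zinv, ← mul_smul_comm, ← mul_add]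
      congr 1
      rw [sub_smul, one_smul]
      abel
  have hDpowZ : ∀ (a : ℕ) (k : ℤ), D ^ a * Z k = Z k * (D + k • h) ^ a := by
    intro a k
    induction a with
    | zero => simp
    | succ n ih =>
      calc D ^ (n + 1) * Z k = D * (D ^ n * Z k) := by rw [pow_succ', mul_assoc]
        _ = D * Z k * (D + k • h) ^ n := by rw [ih, mul_assoc]
        _ = Z k * ((D + k • h) * (D + k • h) ^ n) := by rw [hDZ, mul_assoc]
        _ = Z k * (D + k • h) ^ (n + 1) := by rw [← pow_succ']
  -- central movers
  have mover : ∀ w : A, (∀ q : A, w * q = q * w) → ∀ x y : A, x * (w * y) = w * (x * y) := by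
    intro w hw x y
    rw [← mul_assoc, ← hw x, mul_assoc]
  have cenH : ∀ (m : ℤ) (q : A), H m * q = q * H m := fun m q => (CH m q).eq.symm
  have cenhp : ∀ (n : ℕ) (q : A), h ^ n * q = q * h ^ n := by
    intro n q
    have hq : Commute q h := (hcentral q).symm
    exact (hq.pow_right n).eq.symm
  have cenN : ∀ (n : ℕ) (q : A), (n : A) * q = q * (n : A) := by
    intro n q
    exact (Nat.cast_commute n q).eq
  -- the key scalar multiplication formula
  have mulE : ∀ (c c' k l : ℤ) (a b : ℕ),
      (H c * Z k * D ^ a) * (H c' * Z l * D ^ b)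
        = ∑ m ∈ Finset.range (a + 1),
            (l ^ (a - m) * (a.choose m : ℤ)) •
              (H (c + c' + ((a - m : ℕ) : ℤ)) * Z (k + l) * D ^ (m + b)) := by
    intro c c' k l a b
    have swap1 : Z k * D ^ a * H c' = H c' * (Z k * D ^ a) := (CH c' _).eq
    have step1 : (H c * Z k * D ^ a) * (H c' * Z l * D ^ b)
        = H (c + c') * (Z (k + l) * ((D + l • h) ^ a * D ^ b)) := by
      calc H c * Z k * D ^ a * (H c' * Z l * D ^ b)
          = H c * (Z k * D ^ a * H c') * (Z l * D ^ b) := by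
            simp only [mul_assoc]
        _ = H c * (H c' * (Z k * (D ^ a * Z l) * D ^ b)) := by
            rw [swap1]; simp only [mul_assoc]
        _ = H (c + c') * (Z k * (Z l * (D + l • h) ^ a) * D ^ b) := by
            rw [← mul_assoc, hHmul, hDpowZ]
        _ = H (c + c') * (Z (k + l) * ((D + l • h) ^ a * D ^ b)) := by
            rw [← mul_assoc (Z k), hZmul]; simp only [mul_assoc]
    rw [step1]
    have hDh : Commute D h := (hcentral D).symm
    have hcomm : Commute D (l • h) := hDh.smul_right l
    rw [hcomm.add_pow a, Finset.sum_mul, Finset.mul_sum, Finset.mul_sum]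
    refine Finset.sum_congr rfl ?_
    intro m _
    -- term: H (c+c') * (Z (k+l) * (D^m * (l•h)^(a-m) * ↑(choose a m) * D^b))
    rw [smul_pow]
    have hrw : (l : ℤ) ^ (a - m) • h ^ (a - m) = (l ^ (a - m) : ℤ) • h ^ (a - m) := rfl
    simp only [smul_mul_assoc, mul_smul_comm]
    rw [mul_smul]
    rw [show ((a.choose m : ℤ)) • (H (c + c' + ((a - m : ℕ) : ℤ)) * Z (k + l) * D ^ (m + b))
        = (a.choose m : A) * (H (c + c' + ((a - m : ℕ) : ℤ)) * Z (k + l) * D ^ (m + b)) by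
      rw [natCast_zsmul, nsmul_eq_mul]]
    congr 1
    -- now pure product identity
    have mN := mover ((a.choose m : A)) (cenN _)
    have mh := mover (h ^ (a - m)) (cenhp _)
    calc H (c + c') * (Z (k + l) * (D ^ m * h ^ (a - m) * (a.choose m : A) * D ^ b))
        = H (c + c') * (Z (k + l) * (D ^ m * (h ^ (a - m) * ((a.choose m : A) * D ^ b)))) := by
          simp only [mul_assoc]
      _ = (a.choose m : A) * (H (c + c') * (Z (k + l) * (D ^ m * (h ^ (a - m) * D ^ b)))) := by
          rw [mN (h ^ (a - m)) (D ^ b), mN (D ^ m) _, mN (Z (k + l)) _, mN (H (c + c')) _]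
      _ = (a.choose m : A) * (H (c + c') * (Z (k + l) * (h ^ (a - m) * (D ^ m * D ^ b)))) := by
          rw [mh (D ^ m) (D ^ b)]
      _ = (a.choose m : A) * (H (c + c') * (h ^ (a - m) * (Z (k + l) * (D ^ m * D ^ b)))) := by
          rw [mh (Z (k + l)) _]
      _ = (a.choose m : A) * (H (c + c' + ((a - m : ℕ) : ℤ)) * Z (k + l) * D ^ (m + b)) := by
          rw [← hHnat (a - m), ← mul_assoc (H (c + c')), hHmul, ← pow_add]
          simp only [mul_assoc]
  -- matrix-level G
  set G : ℤ → ℤ → ℕ → Matrix (Fin K) (Fin K) ℂ → Matrix (Fin K) (Fin K) A :=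
    fun c k a X => Matrix.of fun i j => H c * Z k * D ^ a * algebraMap ℂ A (X i j) with hGdef
  have mulG : ∀ (c c' k l : ℤ) (a b : ℕ) (X Y : Matrix (Fin K) (Fin K) ℂ),
      G c k a X * G c' l b Y
        = ∑ m ∈ Finset.range (a + 1),
            (l ^ (a - m) * (a.choose m : ℤ)) •
              G (c + c' + ((a - m : ℕ) : ℤ)) (k + l) (m + b) (X * Y) := by
    intro c c' k l a b X Y
    ext i j
    rw [Matrix.mul_apply]
    have hp : ∀ p, (G c k a X i p) * (G c' l b Y p j)
        = (H c * Z k * D ^ a) * (H c' * Z l * D ^ b) * algebraMap ℂ A (X i p * Y p j) := by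
      intro p
      show (H c * Z k * D ^ a * algebraMap ℂ A (X i p)) * (H c' * Z l * D ^ b * algebraMap ℂ A (Y p j))
          = _
      rw [_root_.map_mul]
      calc (H c * Z k * D ^ a * algebraMap ℂ A (X i p)) * (H c' * Z l * D ^ b * algebraMap ℂ A (Y p j))
          = (H c * Z k * D ^ a) * ((algebraMap ℂ A (X i p) * (H c' * Z l * D ^ b)) * algebraMap ℂ A (Y p j)) := by
            simp only [mul_assoc]
        _ = (H c * Z k * D ^ a) * (((H c' * Z l * D ^ b) * algebraMap ℂ A (X i p)) * algebraMap ℂ A (Y p j)) := by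
            rw [Algebra.commutes]
        _ = (H c * Z k * D ^ a) * (H c' * Z l * D ^ b) * (algebraMap ℂ A (X i p) * algebraMap ℂ A (Y p j)) := by
            simp only [mul_assoc]
    simp only [hp]
    rw [← Finset.mul_sum, ← map_sum, ← Matrix.mul_apply, mulE]
    rw [Finset.sum_mul]
    rw [Matrix.sum_apply]
    refine Finset.sum_congr rfl ?_
    intro m _
    rw [Matrix.smul_apply, smul_mul_assoc]
    rfl
  -- membership lemmas
  have memT : ∀ (c : ℕ) (k : ℤ) (a : ℕ) (X : Matrix (Fin K) (Fin K) ℂ),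
      G (c : ℤ) k a X ∈ S := by
    intro c k a X
    refine Submodule.subset_span (Or.inl ⟨c, k, a, X, ?_⟩)
    ext i j
    rw [hT]
    show h ^ c * Z k * D ^ a * algebraMap ℂ A (X i j) = _
    rw [← hHnat c]
  have memt : ∀ (k : ℤ) (a : ℕ), G (-1) k a 1 ∈ S := by
    intro k a
    refine Submodule.subset_span (Or.inr ⟨k, a, ?_⟩)
    ext i j
    rw [ht]
    show H (-1) * Z k * D ^ a * algebraMap ℂ A ((1 : Matrix (Fin K) (Fin K) ℂ) i j)
        = (if i = j then hinv * Z k * D ^ a else 0)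
    rw [hHneg1, Matrix.one_apply]
    by_cases hij : i = j
    · simp [hij]
    · simp [hij]
  have memG : ∀ (c : ℤ) (k : ℤ) (a : ℕ) (X : Matrix (Fin K) (Fin K) ℂ), 0 ≤ c →
      G c k a X ∈ S := by
    intro c k a X hc
    have : c = ((c.toNat : ℕ) : ℤ) := (Int.toNat_of_nonneg hc).symm
    rw [this]
    exact memT _ _ _ _
  have memG1 : ∀ (c : ℤ) (k : ℤ) (a : ℕ), -1 ≤ c → G c k a 1 ∈ S := by
    intro c k a hc
    rcases eq_or_lt_of_le hc with hc' | hc'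
    · rw [← hc']
      exact memt k a
    · exact memG c k a 1 (by omega)
  have smulZ : ∀ (n : ℤ) (M : Matrix (Fin K) (Fin K) A), M ∈ S → n • M ∈ S := by
    intro n M hM
    rw [← Int.cast_smul_eq_zsmul ℂ]
    exact S.smul_mem _ hM
  have prodMem : ∀ (c c' k l : ℤ) (a b : ℕ) X Y, 0 ≤ c → 0 ≤ c' →
      G c k a X * G c' l b Y ∈ S := by
    intro c c' k l a b X Y hc hc'
    rw [mulG]
    refine Submodule.sum_mem S ?_
    intro m _
    exact smulZ _ _ (memG _ _ _ _ (by positivity))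
  have keyc : ∀ (c c' k l : ℤ) (a b : ℕ) (X Y : Matrix (Fin K) (Fin K) ℂ),
      X * Y = Y * X →
      (∀ m : ℕ, m < a →
        (l ^ (a - m) * (a.choose m : ℤ)) • G (c + c' + ((a - m : ℕ) : ℤ)) (k + l) (m + b) (X * Y) ∈ S) →
      (∀ m : ℕ, m < b →
        (k ^ (b - m) * (b.choose m : ℤ)) • G (c + c' + ((b - m : ℕ) : ℤ)) (k + l) (m + a) (X * Y) ∈ S) →
      G c k a X * G c' l b Y - G c' l b Y * G c k a X ∈ S := by
    intro c c' k l a b X Y hco h1 h2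
    rw [mulG, mulG, ← hco, add_comm c' c, add_comm l k]
    rw [Finset.sum_range_succ, Finset.sum_range_succ]
    simp only [Nat.sub_self, pow_zero, Nat.choose_self, Nat.cast_one, one_mul, one_smul,
      Nat.cast_zero, add_zero, Nat.cast_ofNat]
    rw [show (a + b : ℕ) = b + a from Nat.add_comm a b]
    rw [add_sub_add_right_eq_sub]
    exact Submodule.sub_mem S (Submodule.sum_mem S fun m hm => h1 m (Finset.mem_range.mp hm))
      (Submodule.sum_mem S fun m hm => h2 m (Finset.mem_range.mp hm))
  -- generators in terms of G
  have hTG : ∀ (c : ℕ) k a X, T c k a X = G (c : ℤ) k a X := by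
    intro c k a X
    ext i j
    rw [hT]
    show _ = H (c : ℤ) * Z k * D ^ a * algebraMap ℂ A (X i j)
    rw [hHnat]
  have htG : ∀ k a, t k a = G (-1) k a 1 := by
    intro k a
    ext i j
    rw [ht]
    show (if i = j then hinv * Z k * D ^ a else 0)
        = H (-1) * Z k * D ^ a * algebraMap ℂ A ((1 : Matrix (Fin K) (Fin K) ℂ) i j)
    rw [hHneg1, Matrix.one_apply]
    by_cases hij : i = j
    · simp [hij]
    · simp [hij]
  -- commutators of generators
  have genpair : ∀ g1 ∈ gen, ∀ g2 ∈ gen, g1 * g2 - g2 * g1 ∈ S := by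
    have Tt : ∀ (c : ℕ) (k : ℤ) (a : ℕ) X (l : ℤ) (b : ℕ),
        G (c : ℤ) k a X * G (-1) l b 1 - G (-1) l b 1 * G (c : ℤ) k a X ∈ S := by
      intro c k a X l b
      refine keyc _ _ _ _ _ _ _ _ (by rw [mul_one, one_mul]) ?_ ?_
      · intro m hm
        refine smulZ _ _ (memG _ _ _ _ ?_)
        have : 1 ≤ a - m := by omega
        have : (1 : ℤ) ≤ ((a - m : ℕ) : ℤ) := by exact_mod_cast this
        omega
      · intro m hm
        refine smulZ _ _ (memG _ _ _ _ ?_)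
        have : 1 ≤ b - m := by omega
        have : (1 : ℤ) ≤ ((b - m : ℕ) : ℤ) := by exact_mod_cast this
        omega
    rintro g1 (⟨c, k, a, X, rfl⟩ | ⟨k, a, rfl⟩) g2 (⟨c', l, b, Y, rfl⟩ | ⟨l, b, rfl⟩)
    · rw [hTG, hTG]
      exact Submodule.sub_mem S
        (prodMem _ _ _ _ _ _ _ _ (by positivity) (by positivity))
        (prodMem _ _ _ _ _ _ _ _ (by positivity) (by positivity))
    · rw [hTG, htG]
      exact Tt c k a X l b
    · rw [hTG, htG]
      have h0 := Tt c' l b Y k a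
      have hneg : G (-1) k a 1 * G (↑c') l b Y - G (↑c') l b Y * G (-1) k a 1
          = -(G (↑c') l b Y * G (-1) k a 1 - G (-1) k a 1 * G (↑c') l b Y) := (neg_sub _ _).symm
      rw [hneg]
      exact S.neg_mem h0
    · rw [htG, htG]
      refine keyc _ _ _ _ _ _ _ _ rfl ?_ ?_
      · intro m hm
        rw [one_mul]
        refine smulZ _ _ (memG1 _ _ _ ?_)
        have : 1 ≤ a - m := by omega
        have : (1 : ℤ) ≤ ((a - m : ℕ) : ℤ) := by exact_mod_cast this
        omega
      · intro m hm
        rw [one_mul]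
        refine smulZ _ _ (memG1 _ _ _ ?_)
        have : 1 ≤ b - m := by omega
        have : (1 : ℤ) ≤ ((b - m : ℕ) : ℤ) := by exact_mod_cast this
        omega
  -- bilinearity
  intro x hx
  induction hx using Submodule.span_induction with
  | mem g hg =>
    intro y hy
    induction hy using Submodule.span_induction with
    | mem g2 hg2 => exact genpair g hg g2 hg2
    | zero => simpa using S.zero_mem
    | add y1 y2 hy1 hy2 ih1 ih2 =>
      have : g * (y1 + y2) - (y1 + y2) * g = (g * y1 - y1 * g) + (g * y2 - y2 * g) := by
        noncomm_ring
      rw [this]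
      exact S.add_mem ih1 ih2
    | smul r y hy ih =>
      have : g * (r • y) - (r • y) * g = r • (g * y - y * g) := by
        rw [mul_smul_comm, smul_mul_assoc, smul_sub]
      rw [this]
      exact S.smul_mem r ih
  | zero =>
    intro y hy
    simpa using S.zero_mem
  | add x1 x2 hx1 hx2 ih1 ih2 =>
    intro y hy
    have : (x1 + x2) * y - y * (x1 + x2) = (x1 * y - y * x1) + (x2 * y - y * x2) := by
      noncomm_ring
    rw [this]
    exact S.add_mem (ih1 y hy) (ih2 y hy)
  | smul r x hx ih =>
    intro y hy
    have : (r • x) * y - y * (r • x) = r • (x * y - y * x) := by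
      rw [mul_smul_comm, smul_mul_assoc, smul_sub]
    rw [this]
    exact S.smul_mem r (ih y hy)
end

section
/- Let \tilde{W}_K be the \mathbb{C}-Lie algebra spanned by symbols T_{k,a}(X) for k \in \mathbb{Z}, a \ge 0, X \in \mathfrak{sl}_K and t_{k,a} for k \in \mathbb{Z}, a \ge 0, with brackets [t_{m,a}, T_{n,b}(X)] = (na - mb) T_{m+n, a+b-1}(X), [t_{m,a}, t_{n,b}] = (na - mb) t_{m+n, a+b-1}, and [T_{m,a}(X), T_{n,b}(Y)] = T_{m+n, a+b}([X,Y]). Then the quotient of the Lie algebra \mathcal{W}_K by the ideal generated by \hbar is isomorphic as a Lie algebra to \tilde{W}_K, i.e. the relations above hold in \mathcal{W}_K modulo \hbar. -/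
open Matrix

section StmtAux
open Finset

section Aux
variable {A : Type*} [Ring A] [Algebra ℂ A]

/-- ℂ-span of the monomials `h^c * D^e`. -/
def Smon (h D : A) : Submodule ℂ A :=
  Submodule.span ℂ {x | ∃ c e : ℕ, x = h ^ c * D ^ e}

theorem mono_mem (h D : A) (c e : ℕ) : h ^ c * D ^ e ∈ Smon h D :=
  Submodule.subset_span ⟨c, e, rfl⟩

theorem Dpow_mem (h D : A) (e : ℕ) : D ^ e ∈ Smon h D := by
  simpa using mono_mem h D 0 e

theorem h_mul_mem {h D : A} {s : A} (hs : s ∈ Smon h D) : h * s ∈ Smon h D := by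
  induction hs using Submodule.span_induction with
  | mem x hx =>
      obtain ⟨c, e, rfl⟩ := hx
      have : h * (h ^ c * D ^ e) = h ^ (c + 1) * D ^ e := by
        rw [← mul_assoc, ← pow_succ']
      rw [this]; exact mono_mem h D _ _
  | zero => simpa using Submodule.zero_mem _
  | add x y _ _ hx hy => rw [mul_add]; exact add_mem hx hy
  | smul c x _ hx => rw [mul_smul_comm]; exact Submodule.smul_mem _ _ hx

theorem mul_mono_mem {h D : A} (hc : ∀ x : A, h * x = x * h) {s : A} (hs : s ∈ Smon h D)
    (c e : ℕ) : s * (h ^ c * D ^ e) ∈ Smon h D := by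
  have hcp : ∀ (c : ℕ) (x : A), h ^ c * x = x * h ^ c := fun c x =>
    ((show Commute h x from hc x).pow_left c).eq
  induction hs using Submodule.span_induction with
  | mem x hx =>
      obtain ⟨c', e', rfl⟩ := hx
      have : h ^ c' * D ^ e' * (h ^ c * D ^ e) = h ^ (c' + c) * D ^ (e' + e) := by
        rw [mul_assoc, ← mul_assoc (D ^ e'), ← hcp c (D ^ e'), ← mul_assoc, ← mul_assoc,
          ← pow_add, mul_assoc, ← pow_add]
      rw [this]; exact mono_mem h D _ _
  | zero => simpa using Submodule.zero_mem _
  | add x y _ _ hx hy => rw [add_mul]; exact add_mem hx hy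
  | smul cc x _ hx => rw [smul_mul_assoc]; exact Submodule.smul_mem _ _ hx

theorem mul_Dpow_mem {h D : A} (hc : ∀ x : A, h * x = x * h) {s : A} (hs : s ∈ Smon h D)
    (e : ℕ) : s * D ^ e ∈ Smon h D := by
  simpa using mul_mono_mem hc hs 0 e

end Aux

section Bin
variable {A : Type*} [Ring A] [Algebra ℂ A]

theorem bin' {h D : A} (hc : ∀ x : A, h * x = x * h) (c : ℤ) (a : ℕ) :
    ∃ s ∈ Smon h D, (D + c • h) ^ a
      = D ^ a + (c * a : ℤ) • (h * D ^ (a - 1)) + h * (h * s) := by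
  have hcp : ∀ (k : ℕ) (x : A), h ^ k * x = x * h ^ k := fun k x =>
    ((show Commute h x from hc x).pow_left k).eq
  rcases a with _ | a'
  · exact ⟨0, Submodule.zero_mem _, by simp⟩
  refine ⟨∑ i ∈ range a', (c ^ (a' + 1 - i) * ((a' + 1).choose i) : ℤ) •
      (h ^ (a' - 1 - i) * D ^ i), Submodule.sum_mem _ fun i _ =>
      zsmul_mem (mono_mem h D _ _) _, ?_⟩
  have hcomm : Commute D (c • h) := by
    rw [zsmul_eq_mul]
    exact ((Int.cast_commute c D).symm).mul_right ((hc D).symm)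
  rw [hcomm.add_pow, Finset.sum_range_succ, Finset.sum_range_succ]
  have cc : ∀ x : A, (c : A) * x = x * (c : A) := fun x => (Int.cast_commute c x).eq
  have e_top : D ^ (a' + 1) * (c • h) ^ (a' + 1 - (a' + 1)) *
      (((a' + 1).choose (a' + 1) : ℕ) : A) = D ^ (a' + 1) := by
    simp
  have e_mid : D ^ a' * (c • h) ^ (a' + 1 - a') * (((a' + 1).choose a' : ℕ) : A)
      = (c * ((a' : ℤ) + 1)) • (h * D ^ a') := by
    have cN : ∀ x : A, ((a' : A) + 1) * x = x * ((a' : A) + 1) := fun x =>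
      ((Nat.cast_commute a' x).add_left (Commute.one_left x)).eq
    rw [Nat.add_sub_cancel_left, Nat.choose_succ_self_right, pow_one,
      zsmul_eq_mul (h * D ^ a'), zsmul_eq_mul h]
    push_cast
    rw [← mul_assoc (D ^ a') (c : A) h, ← cc (D ^ a'), mul_assoc ((c : A)) (D ^ a') h,
      ← hc (D ^ a'), mul_assoc ((c : A)), ← cN (h * D ^ a'), ← mul_assoc]
  have e_sum : ∀ i ∈ range a', D ^ i * (c • h) ^ (a' + 1 - i) *
      (((a' + 1).choose i : ℕ) : A)
      = h * (h * ((c ^ (a' + 1 - i) * ((a' + 1).choose i) : ℤ) •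
          (h ^ (a' - 1 - i) * D ^ i))) := by
    intro i hi
    have hik : a' + 1 - i = (a' - 1 - i) + 2 := by
      have := Finset.mem_range.mp hi; omega
    have r1 : h * (h * (h ^ (a' - 1 - i) * D ^ i)) = h ^ ((a' - 1 - i) + 2) * D ^ i := by
      rw [← mul_assoc h (h ^ (a' - 1 - i)) (D ^ i), ← pow_succ',
        ← mul_assoc h (h ^ (a' - 1 - i + 1)) (D ^ i), ← pow_succ']
    rw [hik, smul_pow, mul_smul_comm, smul_mul_assoc, mul_smul_comm, mul_smul_comm,
      mul_smul]
    congr 1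
    rw [zsmul_eq_mul, Int.cast_natCast, r1, hcp (a' - 1 - i + 2) (D ^ i),
      (Nat.cast_commute ((a' + 1).choose i) (D ^ i * h ^ (a' - 1 - i + 2))).eq]
  rw [e_top, e_mid, Finset.sum_congr rfl e_sum, ← Finset.mul_sum, ← Finset.mul_sum]
  push_cast
  abel

end Bin

section Zlem
variable {A : Type*} [Ring A] [Algebra ℂ A]
variable {z zinv D h : A} {Z : ℤ → A}

theorem Zval (hz1 : z * zinv = 1) (hz2 : zinv * z = 1)
    (hZ : ∀ m : ℤ, Z m = if 0 ≤ m then z ^ m.toNat else zinv ^ (-m).toNat) :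
    ∀ m : ℤ, Z m = (((⟨z, zinv, hz1, hz2⟩ : Aˣ) ^ m : Aˣ) : A) := by
  intro m
  rw [hZ]
  cases m with
  | ofNat k => simp
  | negSucc k =>
      rw [if_neg (Int.negSucc_lt_zero k).not_ge, zpow_negSucc, ← inv_pow,
        Units.val_pow_eq_pow_val]
      show zinv ^ (-Int.negSucc k).toNat = zinv ^ (k + 1)
      congr 1

theorem Zadd (hz1 : z * zinv = 1) (hz2 : zinv * z = 1)
    (hZ : ∀ m : ℤ, Z m = if 0 ≤ m then z ^ m.toNat else zinv ^ (-m).toNat) :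
    ∀ m n : ℤ, Z m * Z n = Z (m + n) := by
  intro m n
  rw [Zval hz1 hz2 hZ, Zval hz1 hz2 hZ, Zval hz1 hz2 hZ, ← Units.val_mul, ← _root_.zpow_add]

theorem Z_zero (hZ : ∀ m : ℤ, Z m = if 0 ≤ m then z ^ m.toNat else zinv ^ (-m).toNat) :
    Z 0 = 1 := by simp [hZ]

theorem Z_one (hZ : ∀ m : ℤ, Z m = if 0 ≤ m then z ^ m.toNat else zinv ^ (-m).toNat) :
    Z 1 = z := by simp [hZ]

theorem Z_negone (hZ : ∀ m : ℤ, Z m = if 0 ≤ m then z ^ m.toNat else zinv ^ (-m).toNat) :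
    Z (-1) = zinv := by
  rw [hZ, if_neg (by omega)]
  norm_num

theorem DZ (hrel : D * z = z * (D + h)) (hz1 : z * zinv = 1) (hz2 : zinv * z = 1)
    (hcentral : ∀ x : A, h * x = x * h)
    (hZ : ∀ m : ℤ, Z m = if 0 ≤ m then z ^ m.toNat else zinv ^ (-m).toNat) :
    ∀ m : ℤ, D * Z m = Z m * (D + m • h) := by
  have hDzinv : D * zinv = zinv * (D - h) := by
    have e1 : zinv * (D * z) * zinv = zinv * (z * (D + h)) * zinv := by rw [hrel]
    rw [← mul_assoc, mul_assoc (zinv * D), hz1, mul_one, ← mul_assoc, hz2, one_mul] at e1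
    rw [mul_sub, ← hcentral zinv, e1, add_mul]
    abel
  have step : ∀ c : ℤ, (D + c • h) * z = z * (D + (c + 1) • h) := by
    intro c
    simp only [add_mul, mul_add, smul_mul_assoc, mul_smul_comm, hrel, hcentral z, add_smul,
      one_smul]
    abel
  have stepinv : ∀ c : ℤ, (D + c • h) * zinv = zinv * (D + (c - 1) • h) := by
    intro c
    simp only [add_mul, mul_add, smul_mul_assoc, mul_smul_comm, hDzinv, hcentral zinv,
      sub_smul, one_smul, mul_sub]
    abel
  intro m
  induction m using Int.induction_on with
  | zero => rw [Z_zero hZ]; simp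
  | succ i ih =>
      rw [← Zadd hz1 hz2 hZ i 1, Z_one hZ, ← mul_assoc, ih, mul_assoc, step, ← mul_assoc]
  | pred i ih =>
      rw [show (-(i : ℤ) - 1) = (-(i : ℤ)) + (-1) by ring, ← Zadd hz1 hz2 hZ (-(i : ℤ)) (-1),
        Z_negone hZ, ← mul_assoc, ih, mul_assoc, stepinv, ← mul_assoc,
        show (-(i : ℤ) - 1) = (-(i : ℤ)) + (-1) by ring]

theorem DpowZ (hrel : D * z = z * (D + h)) (hz1 : z * zinv = 1) (hz2 : zinv * z = 1)
    (hcentral : ∀ x : A, h * x = x * h)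
    (hZ : ∀ m : ℤ, Z m = if 0 ≤ m then z ^ m.toNat else zinv ^ (-m).toNat) :
    ∀ (a : ℕ) (m : ℤ), D ^ a * Z m = Z m * (D + m • h) ^ a := by
  intro a
  induction a with
  | zero => simp
  | succ a ih =>
      intro m
      rw [pow_succ, mul_assoc, DZ hrel hz1 hz2 hcentral hZ, ← mul_assoc, ih, mul_assoc,
        ← pow_succ]
end Zlem

section Scal
variable {A : Type*} [Ring A] [Algebra ℂ A]
variable {z zinv D h : A} {Z : ℤ → A}

theorem scalar3 (hrel : D * z = z * (D + h)) (hz1 : z * zinv = 1) (hz2 : zinv * z = 1)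
    (hcentral : ∀ x : A, h * x = x * h)
    (hZ : ∀ m : ℤ, Z m = if 0 ≤ m then z ^ m.toNat else zinv ^ (-m).toNat)
    (m n : ℤ) (a b : ℕ) :
    ∃ s ∈ Smon h D, Z m * D ^ a * (Z n * D ^ b)
      = Z (m + n) * D ^ (a + b) + (n * a : ℤ) • (h * (Z (m + n) * D ^ (a + b - 1)))
        + h * (h * (Z (m + n) * s)) := by
  have hmove : ∀ x y : A, x * (h * y) = h * (x * y) := fun x y => by
    rw [← mul_assoc, ← hcentral x, mul_assoc]
  have e1 : Z m * D ^ a * (Z n * D ^ b) = Z (m + n) * ((D + n • h) ^ a * D ^ b) := by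
    rw [mul_assoc (Z m) (D ^ a), ← mul_assoc (D ^ a) (Z n) (D ^ b),
      DpowZ hrel hz1 hz2 hcentral hZ a n, mul_assoc (Z n), ← mul_assoc (Z m) (Z n),
      Zadd hz1 hz2 hZ]
  rcases a with _ | a₀
  · refine ⟨0, Submodule.zero_mem _, ?_⟩
    rw [e1]
    simp
  obtain ⟨s, hs, hbin⟩ := bin' hcentral n (a₀ + 1)
  refine ⟨s * D ^ b, mul_Dpow_mem hcentral hs b, ?_⟩
  rw [e1, hbin, add_mul, add_mul, mul_add, mul_add]
  have t1 : Z (m + n) * (D ^ (a₀ + 1) * D ^ b) = Z (m + n) * D ^ (a₀ + 1 + b) := by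
    rw [← pow_add]
  have t2 : Z (m + n) * ((n * ((a₀ : ℕ) + 1 : ℕ) : ℤ) • (h * D ^ (a₀ + 1 - 1)) * D ^ b)
      = (n * ((a₀ : ℕ) + 1 : ℕ) : ℤ) • (h * (Z (m + n) * D ^ (a₀ + 1 + b - 1))) := by
    rw [smul_mul_assoc, mul_smul_comm]
    congr 1
    rw [Nat.add_sub_cancel, mul_assoc, ← pow_add, hmove,
      show a₀ + b = a₀ + 1 + b - 1 by omega]
  have t3 : Z (m + n) * (h * (h * s) * D ^ b) = h * (h * (Z (m + n) * (s * D ^ b))) := by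
    rw [mul_assoc h (h * s), mul_assoc h s, hmove, hmove]
  rw [t1, t3]
  rw [show ((n * ((a₀ : ℕ) + 1 : ℕ) : ℤ)) = (n * ((a₀ + 1 : ℕ) : ℤ)) by push_cast; ring] at t2
  rw [t2]

theorem scalarComm (hrel : D * z = z * (D + h)) (hz1 : z * zinv = 1) (hz2 : zinv * z = 1)
    (hcentral : ∀ x : A, h * x = x * h)
    (hZ : ∀ m : ℤ, Z m = if 0 ≤ m then z ^ m.toNat else zinv ^ (-m).toNat)
    (m n : ℤ) (a b : ℕ) :
    ∃ s ∈ Smon h D, Z m * D ^ a * (Z n * D ^ b) - Z n * D ^ b * (Z m * D ^ a)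
      = (n * a - m * b : ℤ) • (h * (Z (m + n) * D ^ (a + b - 1)))
        + h * (h * (Z (m + n) * s)) := by
  obtain ⟨s₁, hs₁, e₁⟩ := scalar3 hrel hz1 hz2 hcentral hZ m n a b
  obtain ⟨s₂, hs₂, e₂⟩ := scalar3 hrel hz1 hz2 hcentral hZ n m b a
  refine ⟨s₁ - s₂, sub_mem hs₁ hs₂, ?_⟩
  rw [e₁, e₂, add_comm n m, add_comm b a, sub_smul, mul_sub (Z (m + n)) s₁ s₂, mul_sub,
    mul_sub]
  abel

end Scal

section Mat
variable {A : Type*} [Ring A] [Algebra ℂ A]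

def matT (K : ℕ) (Zk : A) (P : Matrix (Fin K) (Fin K) ℂ) :
    A →ₗ[ℂ] Matrix (Fin K) (Fin K) A where
  toFun s := Matrix.of fun i j => Zk * s * algebraMap ℂ A (P i j)
  map_add' x y := by
    ext i j
    simp [mul_add, add_mul]
  map_smul' c x := by
    ext i j
    simp [mul_smul_comm, smul_mul_assoc]

@[simp] theorem matT_apply (K : ℕ) (Zk : A) (P : Matrix (Fin K) (Fin K) ℂ) (s : A)
    (i j : Fin K) : matT K Zk P s i j = Zk * s * algebraMap ℂ A (P i j) := rfl

def matDiag (K : ℕ) (hinv Zk : A) : A →ₗ[ℂ] Matrix (Fin K) (Fin K) A where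
  toFun s := Matrix.of fun i j => if i = j then hinv * (Zk * s) else 0
  map_add' x y := by
    ext i j
    by_cases hij : i = j <;> simp [hij, mul_add]
  map_smul' c x := by
    ext i j
    by_cases hij : i = j <;> simp [hij, mul_smul_comm]

@[simp] theorem matDiag_apply (K : ℕ) (hinv Zk : A) (s : A) (i j : Fin K) :
    matDiag K hinv Zk s i j = if i = j then hinv * (Zk * s) else 0 := rfl

end Mat

end StmtAux

/-- In the Lie algebra `𝒲_K` (spanned by `T_{k,a}(X) = z^k D^a ⊗ X`
for `X ∈ gl_K`, together with `t_{k,a} = T_{k,a}(Id)/ħ`, inside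
`(D_ħ(ℂ*) ⊗ gl_K)[ħ⁻¹]`), the defining relations of the classical limit `W̃_K` hold
modulo `ħ`:  for `X, Y ∈ sl_K`,
`[t_{m,a}, T_{n,b}(X)] ≡ (na - mb) T_{m+n,a+b-1}(X)`,
`[t_{m,a}, t_{n,b}] ≡ (na - mb) t_{m+n,a+b-1}`,
`[T_{m,a}(X), T_{n,b}(Y)] ≡ T_{m+n,a+b}([X,Y])`,
where the congruence means that the difference is `ħ` times an element of `𝒲_K`.
Hence `𝒲_K/(ħ = 0) ≃ W̃_K` as in the paper. -/
theorem stmt_2 {A : Type*} [Ring A] [Algebra ℂ A] (K : ℕ)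
    (z zinv D h hinv : A)
    (hrel : D * z = z * (D + h))
    (hz1 : z * zinv = 1) (hz2 : zinv * z = 1)
    (hcentral : ∀ x : A, h * x = x * h)
    (hh1 : h * hinv = 1) (hh2 : hinv * h = 1)
    (Z : ℤ → A)
    (hZ : ∀ m : ℤ, Z m = if 0 ≤ m then z ^ m.toNat else zinv ^ (-m).toNat)
    (T : ℕ → ℤ → ℕ → Matrix (Fin K) (Fin K) ℂ → Matrix (Fin K) (Fin K) A)
    (hT : ∀ c k a X i j, T c k a X i j = h ^ c * Z k * D ^ a * algebraMap ℂ A (X i j))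
    (t : ℤ → ℕ → Matrix (Fin K) (Fin K) A)
    (ht : ∀ k a i j, t k a i j = if i = j then hinv * Z k * D ^ a else 0)
    (W : Submodule ℂ (Matrix (Fin K) (Fin K) A))
    (hW : W = Submodule.span ℂ
        ({M : Matrix (Fin K) (Fin K) A | ∃ c k a X, M = T c k a X} ∪
         {M : Matrix (Fin K) (Fin K) A | ∃ k a, M = t k a})) :
    ∀ (m n : ℤ) (a b : ℕ) (X Y : Matrix (Fin K) (Fin K) ℂ),
      X.trace = 0 → Y.trace = 0 →
      (∃ w ∈ W, (t m a * T 0 n b X - T 0 n b X * t m a)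
          - (n * a - m * b : ℤ) • T 0 (m + n) (a + b - 1) X = h • w) ∧
      (∃ w ∈ W, (t m a * t n b - t n b * t m a)
          - (n * a - m * b : ℤ) • t (m + n) (a + b - 1) = h • w) ∧
      (∃ w ∈ W, (T 0 m a X * T 0 n b Y - T 0 n b Y * T 0 m a X)
          - T 0 (m + n) (a + b) (X * Y - Y * X) = h • w) := by
  intro m n a b X Y _ _
  -- basic commutation facts
  have hcp : ∀ (k : ℕ) (x : A), h ^ k * x = x * h ^ k := fun k x =>
    ((show Commute h x from hcentral x).pow_left k).eq
  have hinvc : ∀ x : A, hinv * x = x * hinv := by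
    intro x
    calc hinv * x = hinv * (x * (h * hinv)) := by rw [hh1, mul_one]
      _ = hinv * (h * (x * hinv)) := by rw [← mul_assoc x h, ← hcentral x, mul_assoc]
      _ = (hinv * h) * (x * hinv) := (mul_assoc _ _ _).symm
      _ = x * hinv := by rw [hh2, one_mul]
  have hmove : ∀ x y : A, x * (h * y) = h * (x * y) := fun x y => by
    rw [← mul_assoc, ← hcentral x, mul_assoc]
  have hinvmove : ∀ x y : A, x * (hinv * y) = hinv * (x * y) := fun x y => by
    rw [← mul_assoc, ← hinvc x, mul_assoc]
  have hcan : ∀ x : A, hinv * (h * x) = x := fun x => by rw [← mul_assoc, hh2, one_mul]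
  have hcan2 : ∀ x : A, h * (hinv * x) = x := fun x => by rw [← mul_assoc, hh1, one_mul]
  have algc : ∀ (r : ℂ) (x : A), algebraMap ℂ A r * x = x * algebraMap ℂ A r :=
    fun r x => Algebra.commutes r x
  -- membership of the generators
  have hWT : ∀ (c : ℕ) (k : ℤ) (e : ℕ) (P : Matrix (Fin K) (Fin K) ℂ), T c k e P ∈ W := by
    intro c k e P; rw [hW]; exact Submodule.subset_span (Or.inl ⟨c, k, e, P, rfl⟩)
  have hWt : ∀ (k : ℤ) (e : ℕ), t k e ∈ W := by
    intro k e; rw [hW]; exact Submodule.subset_span (Or.inr ⟨k, e, rfl⟩)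
  have hmatT : ∀ (k : ℤ) (P : Matrix (Fin K) (Fin K) ℂ) {s : A}, s ∈ Smon h D →
      matT K (Z k) P s ∈ W := by
    intro k P s hs
    have hle : Smon h D ≤ Submodule.comap (matT K (Z k) P) W := by
      refine Submodule.span_le.mpr ?_
      rintro x ⟨c, e, rfl⟩
      have heq : matT K (Z k) P (h ^ c * D ^ e) = T c k e P := by
        ext i j
        rw [matT_apply, hT]
        congr 1
        rw [← mul_assoc, ← hcp c (Z k)]
      exact Submodule.mem_comap.mpr (heq ▸ hWT c k e P)
    exact hle hs
  have hmatDiag : ∀ (k : ℤ) {s : A}, s ∈ Smon h D → matDiag K hinv (Z k) s ∈ W := by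
    intro k s hs
    have hle : Smon h D ≤ Submodule.comap (matDiag K hinv (Z k)) W := by
      refine Submodule.span_le.mpr ?_
      rintro x ⟨c, e, rfl⟩
      rcases c with _ | c'
      · have heq : matDiag K hinv (Z k) (h ^ 0 * D ^ e) = t k e := by
          ext i j
          rw [matDiag_apply, ht]
          by_cases hij : i = j <;> simp [hij, mul_assoc]
        exact Submodule.mem_comap.mpr (heq ▸ hWt k e)
      · have heq : matDiag K hinv (Z k) (h ^ (c' + 1) * D ^ e) = T c' k e 1 := by
          ext i j
          rw [matDiag_apply, hT, Matrix.one_apply, apply_ite (algebraMap ℂ A), _root_.map_one,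
            _root_.map_zero, mul_ite, mul_one, mul_zero]
          by_cases hij : i = j
          · rw [if_pos hij, if_pos hij, ← mul_assoc (Z k), ← hcp (c' + 1) (Z k), pow_succ',
              mul_assoc h (h ^ c') (Z k), mul_assoc h (h ^ c' * Z k) (D ^ e), hcan]
          · rw [if_neg hij, if_neg hij]
        exact Submodule.mem_comap.mpr (heq ▸ hWT c' k e 1)
    exact hle hs
  -- entries of products
  have htT : ∀ (k l : ℤ) (e f : ℕ) (P : Matrix (Fin K) (Fin K) ℂ) (i j : Fin K),
      (t k e * T 0 l f P) i j
        = hinv * (Z k * D ^ e * (Z l * D ^ f)) * algebraMap ℂ A (P i j) := by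
    intro k l e f P i j
    rw [Matrix.mul_apply, Finset.sum_eq_single i]
    · rw [ht, if_pos rfl, hT, pow_zero, one_mul, mul_assoc hinv (Z k) (D ^ e),
        mul_assoc hinv (Z k * D ^ e), ← mul_assoc (Z k * D ^ e) (Z l * D ^ f),
        ← mul_assoc hinv]
    · intro k' _ hk'
      rw [ht, if_neg fun hh => hk' hh.symm, zero_mul]
    · intro hi; exact absurd (Finset.mem_univ i) hi
  have hTt : ∀ (k l : ℤ) (e f : ℕ) (P : Matrix (Fin K) (Fin K) ℂ) (i j : Fin K),
      (T 0 l f P * t k e) i j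
        = hinv * (Z l * D ^ f * (Z k * D ^ e)) * algebraMap ℂ A (P i j) := by
    intro k l e f P i j
    rw [Matrix.mul_apply, Finset.sum_eq_single j]
    · rw [ht, if_pos rfl, hT, pow_zero, one_mul, mul_assoc hinv (Z k) (D ^ e), hinvmove,
        mul_assoc (Z l * D ^ f), algc, ← mul_assoc (Z l * D ^ f), ← mul_assoc hinv]
    · intro k' _ hk'
      rw [ht, if_neg hk', mul_zero]
    · intro hj; exact absurd (Finset.mem_univ j) hj
  have htt2 : ∀ (k l : ℤ) (e f : ℕ) (i j : Fin K),
      (t k e * t l f) i j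
        = if i = j then hinv * (hinv * (Z k * D ^ e * (Z l * D ^ f))) else 0 := by
    intro k l e f i j
    rw [Matrix.mul_apply, Finset.sum_eq_single i]
    · rw [ht, if_pos rfl, ht]
      by_cases hij : i = j
      · rw [if_pos hij, if_pos hij, mul_assoc hinv (Z k) (D ^ e),
          mul_assoc hinv (Z l) (D ^ f), hinvmove,
          mul_assoc hinv (Z k * D ^ e) (Z l * D ^ f)]
      · rw [if_neg hij, if_neg hij, mul_zero]
    · intro k' _ hk'
      rw [ht, if_neg fun hh => hk' hh.symm, zero_mul]
    · intro hi; exact absurd (Finset.mem_univ i) hi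
  have hTT2 : ∀ (k l : ℤ) (e f : ℕ) (P Q : Matrix (Fin K) (Fin K) ℂ) (i j : Fin K),
      (T 0 k e P * T 0 l f Q) i j
        = Z k * D ^ e * (Z l * D ^ f) * algebraMap ℂ A ((P * Q) i j) := by
    intro k l e f P Q i j
    rw [Matrix.mul_apply, Matrix.mul_apply, _root_.map_sum, Finset.mul_sum]
    refine Finset.sum_congr rfl fun k' _ => ?_
    rw [hT, hT, pow_zero, one_mul, one_mul, _root_.map_mul]
    conv_lhs => rw [mul_assoc (Z k * D ^ e), ← mul_assoc (algebraMap ℂ A (P i k')),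
      algc (P i k'), mul_assoc (Z l * D ^ f), ← mul_assoc (Z k * D ^ e)]
  refine ⟨?_, ?_, ?_⟩
  -- goal 1 : [t, T]
  · obtain ⟨s, hs, hsc⟩ := scalarComm hrel hz1 hz2 hcentral hZ m n a b
    refine ⟨matT K (Z (m + n)) X s, hmatT _ _ hs, ?_⟩
    have key1 : ∀ p : A, hinv * (Z m * D ^ a * (Z n * D ^ b)) * p
        - hinv * (Z n * D ^ b * (Z m * D ^ a)) * p
        - (n * a - m * b : ℤ) • (Z (m + n) * D ^ (a + b - 1) * p)
        = h * (Z (m + n) * s * p) := by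
      intro p
      rw [← sub_mul, ← mul_sub, hsc]
      simp only [mul_add, add_mul, smul_mul_assoc, mul_smul_comm, mul_assoc, hcan, hcan2,
        hmove]
      abel
    ext i j
    simp only [Matrix.sub_apply, Matrix.smul_apply, htT, hTt, hT, pow_zero, one_mul,
      matT_apply, smul_eq_mul]
    exact key1 _
  -- goal 2 : [t, t]
  · obtain ⟨s, hs, hsc⟩ := scalarComm hrel hz1 hz2 hcentral hZ m n a b
    refine ⟨matDiag K hinv (Z (m + n)) s, hmatDiag _ hs, ?_⟩
    have key2 : hinv * (hinv * (Z m * D ^ a * (Z n * D ^ b)))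
        - hinv * (hinv * (Z n * D ^ b * (Z m * D ^ a)))
        - (n * a - m * b : ℤ) • (hinv * Z (m + n) * D ^ (a + b - 1))
        = h * (hinv * (Z (m + n) * s)) := by
      rw [← mul_sub hinv, ← mul_sub hinv, hsc]
      simp only [mul_add, mul_smul_comm, mul_assoc, hcan, hcan2, hmove]
      abel
    ext i j
    by_cases hij : i = j
    · simp only [Matrix.sub_apply, Matrix.smul_apply, htt2, ht, matDiag_apply, if_pos hij,
        smul_eq_mul]
      exact key2
    · simp only [Matrix.sub_apply, Matrix.smul_apply, htt2, ht, if_neg hij, matDiag_apply,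
        smul_eq_mul, mul_zero, sub_zero, sub_self, smul_zero]
  -- goal 3 : [T, T]
  · obtain ⟨s₁, hs₁, e₁⟩ := scalar3 hrel hz1 hz2 hcentral hZ m n a b
    obtain ⟨s₂, hs₂, e₂⟩ := scalar3 hrel hz1 hz2 hcentral hZ n m b a
    rw [add_comm n m, add_comm b a] at e₂
    refine ⟨((n * a : ℤ) • matT K (Z (m + n)) (X * Y) (D ^ (a + b - 1))
        - (m * b : ℤ) • matT K (Z (m + n)) (Y * X) (D ^ (a + b - 1)))
        + (matT K (Z (m + n)) (X * Y) (h * s₁) - matT K (Z (m + n)) (Y * X) (h * s₂)),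
      add_mem (sub_mem (zsmul_mem (hmatT _ _ (Dpow_mem h D _)) _)
          (zsmul_mem (hmatT _ _ (Dpow_mem h D _)) _))
        (sub_mem (hmatT _ _ (h_mul_mem hs₁)) (hmatT _ _ (h_mul_mem hs₂))), ?_⟩
    have key3 : ∀ p q : A, Z m * D ^ a * (Z n * D ^ b) * p
        - Z n * D ^ b * (Z m * D ^ a) * q
        - Z (m + n) * D ^ (a + b) * (p - q)
        = h * ((n * a : ℤ) • (Z (m + n) * D ^ (a + b - 1) * p)
            - (m * b : ℤ) • (Z (m + n) * D ^ (a + b - 1) * q)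
            + (Z (m + n) * (h * s₁) * p - Z (m + n) * (h * s₂) * q)) := by
      intro p q
      rw [e₁, e₂]
      simp only [add_mul, sub_mul, mul_sub, mul_add, smul_mul_assoc, mul_smul_comm,
        mul_assoc, hmove]
      abel
    ext i j
    simp only [Matrix.sub_apply, Matrix.add_apply, Matrix.smul_apply, hTT2, hT, pow_zero,
      one_mul, matT_apply, smul_eq_mul, _root_.map_sub]
    exact key3 _ _
end

section
/- Let L be a graded Lie algebra with a grading-compatible action of the 3-dimensional Heisenberg Lie algebra Heis (with generators p of degree 2, q of degree -2, central c of degree 0, [q,p] = c) acting by derivations. Assume L is negatively determined: L_i = 0 for all odd i, and q : L_{2i} \to L_{2i-2} is injective for all i > 0. Then the Lie bracket on L is determined by the brackets [L_{2i}, L_{2j}] for i + j \le 0; precisely, if two such Lie algebra structures with the same Heis action agree on all brackets [x, y] with x \in L_{2i}, y \in L_{2j}, i + j \le 0, then they are equal. -/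
/-- Let `V` be a `ℤ`-graded `ℚ`-vector space (internal direct sum of
graded pieces `G i`), carrying a graded action of the 3-dimensional Heisenberg Lie
algebra: `p` of degree `+2`, `q` of degree `-2` acting by derivations for any of the
bracket structures considered.  Assume `V` is negatively determined: all odd graded
pieces vanish and `q : G (2i) → G (2i-2)` is injective for `i > 0`.  If `B₁` and `B₂`
are two graded Lie algebra structures on `V` for which `p` and `q` act by derivations
(the same Heis action), and which agree on all brackets `[x, y]` with
`x ∈ G (2i)`, `y ∈ G (2j)`, `i + j ≤ 0`, then `B₁ = B₂`. -/
theorem stmt_7 (V : Type) [AddCommGroup V] [Module ℚ V]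
    (G : ℤ → Submodule ℚ V)
    (hinternal : DirectSum.IsInternal G)
    (hodd : ∀ i : ℤ, Odd i → G i = ⊥)
    (p q : V →ₗ[ℚ] V)
    (hpdeg : ∀ i : ℤ, ∀ x ∈ G i, p x ∈ G (i + 2))
    (hqdeg : ∀ i : ℤ, ∀ x ∈ G i, q x ∈ G (i - 2))
    (hqinj : ∀ i : ℤ, 0 < i → ∀ x ∈ G (2 * i), q x = 0 → x = 0)
    (B₁ B₂ : V →ₗ[ℚ] V →ₗ[ℚ] V)
    -- both are Lie algebra structures:
    (halt₁ : ∀ x, B₁ x x = 0) (halt₂ : ∀ x, B₂ x x = 0)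
    (hjac₁ : ∀ x y z, B₁ x (B₁ y z) = B₁ (B₁ x y) z + B₁ y (B₁ x z))
    (hjac₂ : ∀ x y z, B₂ x (B₂ y z) = B₂ (B₂ x y) z + B₂ y (B₂ x z))
    -- both are graded:
    (hgr₁ : ∀ (i j : ℤ) (x y : V), x ∈ G i → y ∈ G j → B₁ x y ∈ G (i + j))
    (hgr₂ : ∀ (i j : ℤ) (x y : V), x ∈ G i → y ∈ G j → B₂ x y ∈ G (i + j))
    -- p and q act by derivations for both brackets:
    (hp₁ : ∀ x y, p (B₁ x y) = B₁ (p x) y + B₁ x (p y))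
    (hp₂ : ∀ x y, p (B₂ x y) = B₂ (p x) y + B₂ x (p y))
    (hq₁ : ∀ x y, q (B₁ x y) = B₁ (q x) y + B₁ x (q y))
    (hq₂ : ∀ x y, q (B₂ x y) = B₂ (q x) y + B₂ x (q y))
    -- agreement on non-positive total degree:
    (hagree : ∀ i j : ℤ, i + j ≤ 0 →
      ∀ x ∈ G (2 * i), ∀ y ∈ G (2 * j), B₁ x y = B₂ x y) :
    B₁ = B₂ := by

  have key : ∀ n : ℕ, ∀ a b : ℤ, a + b ≤ (n : ℤ) →
      ∀ x ∈ G (2 * a), ∀ y ∈ G (2 * b), B₁ x y = B₂ x y := by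
    intro n
    induction n with
    | zero =>
      intro a b hab x hx y hy
      exact hagree a b (by exact_mod_cast hab) x hx y hy
    | succ n ih =>
      intro a b hab x hx y hy
      rcases le_or_gt (a + b) (n : ℤ) with h | h
      · exact ih a b h x hx y hy
      · have hpos : 0 < a + b := by
          have : (0 : ℤ) ≤ n := Int.natCast_nonneg n
          omega
        have hx2 : q x ∈ G (2 * (a - 1)) := by
          have := hqdeg _ x hx
          have e : 2 * a - 2 = 2 * (a - 1) := by ring
          rwa [e] at this
        have hy2 : q y ∈ G (2 * (b - 1)) := by
          have := hqdeg _ y hy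
          have e : 2 * b - 2 = 2 * (b - 1) := by ring
          rwa [e] at this
        have e1 : B₁ (q x) y = B₂ (q x) y := ih (a - 1) b (by omega) _ hx2 y hy
        have e2 : B₁ x (q y) = B₂ x (q y) := ih a (b - 1) (by omega) x hx _ hy2
        have hdiff : B₁ x y - B₂ x y ∈ G (2 * (a + b)) := by
          have h1 := hgr₁ _ _ _ _ hx hy
          have h2 := hgr₂ _ _ _ _ hx hy
          have e : 2 * a + 2 * b = 2 * (a + b) := by ring
          rw [e] at h1 h2
          exact sub_mem h1 h2
        have hq0 : q (B₁ x y - B₂ x y) = 0 := by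
          rw [map_sub, hq₁, hq₂, e1, e2, sub_self]
        have := hqinj (a + b) hpos _ hdiff hq0
        exact sub_eq_zero.mp this
  have homog : ∀ (i j : ℤ) (x y : V), x ∈ G i → y ∈ G j → B₁ x y = B₂ x y := by
    intro i j x y hx hy
    rcases Int.even_or_odd i with ⟨a, ha⟩ | hoi
    · rcases Int.even_or_odd j with ⟨b, hb⟩ | hoj
      · have hx' : x ∈ G (2 * a) := by rwa [show 2 * a = i by omega]
        have hy' : y ∈ G (2 * b) := by rwa [show 2 * b = j by omega]
        exact key (a + b).toNat a b (by omega) x hx' y hy'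
      · have : y = 0 := by
          have := hodd j hoj
          rw [this] at hy; simpa using hy
        simp [this]
    · have : x = 0 := by
        have := hodd i hoi
        rw [this] at hx; simpa using hx
      simp [this]
  have htop : (⨆ i, G i : Submodule ℚ V) = ⊤ := hinternal.submodule_iSup_eq_top
  refine LinearMap.ext fun x => ?_
  have hx : x ∈ ⨆ i, G i := by rw [htop]; trivial
  refine Submodule.iSup_induction (motive := fun x => B₁ x = B₂ x) G hx ?_ ?_ ?_
  · intro i x hxi
    refine LinearMap.ext fun y => ?_
    have hy : y ∈ ⨆ j, G j := by rw [htop]; trivial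
    refine Submodule.iSup_induction (motive := fun y => B₁ x y = B₂ x y) G hy ?_ ?_ ?_
    · intro j y hyj
      exact homog i j x y hxi hyj
    · simp
    · intro u v hu hv
      simp [map_add, hu, hv]
  · simp
  · intro u v hu hv
    simp [map_add, hu, hv]
end

section
/- Fix n \ge 1 and K \ge 1, and let \zeta^n \in \mathbb{Q}^{K+1} be defined by \zeta^n_0 = 2Kn - 1 and \zeta^n_i = -2n for i = 1, \dots, K. Then any \zeta^n-semistable representation of dimension vector (n\cdot\delta, 1) (where \delta = (1,\dots,1) \in \mathbb{N}^{K+1} and the framing vertex has dimension 1) is \zeta^n-stable. Concretely: if (\mathbf{d}, a) with \mathbf{d} \le n\cdot\delta componentwise and a \in \{0,1\} is a proper nonzero subdimension vector satisfying (2Kn-1)\mathbf{d}_0 - 2n\sum_{i=1}^{K}\mathbf{d}_i + a\,\zeta_\infty = 0 with \zeta_\infty = -\sum_{i=0}^K \zeta^n_i \cdot n, then (\mathbf{d}, a) = 0 or (\mathbf{d},a) = (n\cdot\delta, 1). -/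
/-- Fix `n, K ≥ 1` and let `ζⁿ ∈ ℚ^{K+1}` be `ζⁿ₀ = 2Kn - 1`,
`ζⁿᵢ = -2n` (`i = 1, …, K`), with `ζ_∞ = -(∑ᵢ ζⁿᵢ)·n`.  Any `ζⁿ`-semistable
representation of the framed (tripled/doubled) cyclic quiver of dimension `(n·δ, 1)`
is `ζⁿ`-stable: concretely, if `(d, a)` with `d ≤ n·δ` componentwise and `a ∈ {0,1}`
is a subdimension vector of slope zero, i.e.
`(2Kn-1)·d₀ - 2n·∑_{i=1}^K dᵢ + a·ζ_∞ = 0`, then `(d, a) = 0` or `(d, a) = (n·δ, 1)`. -/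
theorem stmt_10 (K n : ℕ) (hK : 1 ≤ K) (hn : 1 ≤ n)
    (d : Fin (K + 1) → ℕ) (a : ℕ) (hd : ∀ i, d i ≤ n) (ha : a ≤ 1)
    (hchi : (2 * K * n - 1 : ℤ) * d 0
        - 2 * n * (∑ i : Fin K, (d i.succ : ℤ))
        + a * (-((2 * (K : ℤ) * n - 1) + (K : ℤ) * (-(2 * n))) * n) = 0) :
    ((∀ i, d i = 0) ∧ a = 0) ∨ ((∀ i, d i = n) ∧ a = 1) := by
  set S : ℤ := ∑ i : Fin K, (d i.succ : ℤ) with hSdef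
  have hnz : (n : ℤ) ≥ 1 := by exact_mod_cast hn
  have key : (2 * (K : ℤ) * n - 1) * d 0 - 2 * n * S + a * n = 0 := by
    have h : ((a : ℤ) * (-((2 * (K : ℤ) * n - 1) + (K : ℤ) * (-(2 * n))) * n))
        = a * n := by ring
    rw [h] at hchi; exact hchi
  interval_cases a
  · left
    push_cast at key
    refine ⟨?_, rfl⟩
    have hdvd : (2 * (n : ℤ)) ∣ (2 * (K : ℤ) * n - 1) * d 0 :=
      ⟨S, by linear_combination key⟩
    have hcop : IsCoprime (2 * (n : ℤ)) (2 * (K : ℤ) * n - 1) :=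
      ⟨(K : ℤ), -1, by ring⟩
    have hdvd0 : (2 * (n : ℤ)) ∣ (d 0 : ℤ) := hcop.dvd_of_dvd_mul_left hdvd
    have hd0 : d 0 = 0 := by
      by_contra h
      have hpos : (0 : ℤ) < d 0 := by
        exact_mod_cast Nat.pos_of_ne_zero h
      have h1 := Int.le_of_dvd hpos hdvd0
      have h2 : (d 0 : ℤ) ≤ n := by exact_mod_cast hd 0
      omega
    have hS0 : S = 0 := by
      have : (d 0 : ℤ) = 0 := by exact_mod_cast hd0
      rw [this] at key
      have : 2 * (n : ℤ) * S = 0 := by linear_combination -key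
      have h2n : (2 * (n : ℤ)) ≠ 0 := by omega
      exact (mul_eq_zero.mp this).resolve_left h2n
    have hterm : ∀ i ∈ Finset.univ, (d (Fin.succ i) : ℤ) = 0 := by
      rw [hSdef] at hS0
      exact (Finset.sum_eq_zero_iff_of_nonneg
        (fun i _ => by positivity)).mp hS0
    intro i
    refine Fin.cases hd0 (fun j => ?_) i
    exact_mod_cast hterm j (Finset.mem_univ j)
  · right
    push_cast at key
    refine ⟨?_, rfl⟩
    have hdvd : ((n : ℤ)) ∣ (2 * (K : ℤ) * n - 1) * d 0 :=
      ⟨2 * S - 1, by linear_combination key⟩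
    have hcop : IsCoprime ((n : ℤ)) (2 * (K : ℤ) * n - 1) :=
      ⟨2 * (K : ℤ), -1, by ring⟩
    have hdvd0 : ((n : ℤ)) ∣ (d 0 : ℤ) := hcop.dvd_of_dvd_mul_left hdvd
    have hd0 : d 0 = n := by
      by_contra h
      rcases Nat.eq_zero_or_pos (d 0) with h0 | hpos
      · -- d 0 = 0 : key gives -2nS + n = 0, i.e. n*(1 - 2S) = 0
        have : (d 0 : ℤ) = 0 := by exact_mod_cast h0
        rw [this] at key
        have hmul : (n : ℤ) * (1 - 2 * S) = 0 := by linear_combination key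
        have := (mul_eq_zero.mp hmul).resolve_left (by omega)
        omega
      · have hpos' : (0 : ℤ) < d 0 := by exact_mod_cast hpos
        have h1 := Int.le_of_dvd hpos' hdvd0
        have h2 : (d 0 : ℤ) ≤ n := by exact_mod_cast hd 0
        have : d 0 = n := by omega
        exact h this
    have hSval : S = K * n := by
      have hdn : (d 0 : ℤ) = n := by exact_mod_cast hd0
      rw [hdn] at key
      have hmul : (n : ℤ) * (2 * (K : ℤ) * n - 2 * S) = 0 := by linear_combination key
      have := (mul_eq_zero.mp hmul).resolve_left (by omega)
      linarith
    have hsum : ∑ i : Fin K, ((n : ℤ) - (d i.succ : ℤ)) = 0 := by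
      rw [Finset.sum_sub_distrib, ← hSdef, hSval]
      simp [mul_comm]
    have hterm : ∀ i ∈ Finset.univ, ((n : ℤ) - (d (Fin.succ i) : ℤ)) = 0 := by
      refine (Finset.sum_eq_zero_iff_of_nonneg (fun i _ => ?_)).mp hsum
      have : (d i.succ : ℤ) ≤ n := by exact_mod_cast hd i.succ
      linarith
    intro i
    refine Fin.cases hd0 (fun j => ?_) i
    have := hterm j (Finset.mem_univ j)
    omega
end

section
/- Fix K \ge 1 and m, n \ge 0, and let \zeta^m be the stability condition with \zeta^m_0 = 2Km - 1 and \zeta^m_i = -2m for i = 1, \dots, K (extended to the framing vertex by \zeta^m_\infty = -m\sum_{i=0}^K \zeta^m_i). If \rho is a \zeta^{n+m}-semistable framed representation of the cyclic quiver with K+1 vertices of dimension ((n+m)\cdot\delta, 1), then any quotient representation \rho' of \rho of dimension (m\cdot\delta, 1) is \zeta^m-semistable. -/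
open Module

lemma finrank_comap_of_surj {M N : Type} [AddCommGroup M] [Module ℂ M]
    [AddCommGroup N] [Module ℂ N] [FiniteDimensional ℂ M] [FiniteDimensional ℂ N]
    (f : M →ₗ[ℂ] N) (hf : Function.Surjective f) (S : Submodule ℂ N) :
    finrank ℂ (S.comap f) = finrank ℂ (LinearMap.ker f) + finrank ℂ S := by
  have h1 := LinearMap.finrank_range_add_finrank_ker (f.domRestrict (S.comap f))
  rw [LinearMap.range_domRestrict, LinearMap.ker_domRestrict] at h1
  have hmap : (S.comap f).map f = S := Submodule.map_comap_eq_of_surjective hf S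
  have hle : LinearMap.ker f ≤ S.comap f := by
    intro v hv
    simp [Submodule.mem_comap, LinearMap.mem_ker.mp hv]
  have h2 : finrank ℂ ((LinearMap.ker f).comap (S.comap f).subtype)
      = finrank ℂ (LinearMap.ker f) :=
    (Submodule.comapSubtypeEquivOfLe hle).finrank_eq
  rw [hmap, h2] at h1
  omega

lemma sum_if_split (Kp : ℕ) (c0 c : ℤ) (e : Fin (Kp + 1) → ℤ) :
    ∑ i : Fin (Kp + 1), (if i = 0 then c0 else c) * e i
      = c0 * e 0 + c * ((∑ i : Fin (Kp + 1), e i) - e 0) := by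
  classical
  have h0 : ∀ i ∈ Finset.univ.erase (0 : Fin (Kp + 1)),
      (if i = 0 then c0 else c) * e i = c * e i := by
    intro i hi
    rw [if_neg (Finset.ne_of_mem_erase hi)]
  rw [← Finset.sum_erase_add Finset.univ _ (Finset.mem_univ (0 : Fin (Kp + 1))),
    Finset.sum_congr rfl h0, if_pos rfl, ← Finset.mul_sum]
  have h1 : ∑ i : Fin (Kp + 1), e i
      = (∑ i ∈ Finset.univ.erase (0 : Fin (Kp + 1)), e i) + e 0 :=
    (Finset.sum_erase_add _ _ (Finset.mem_univ _)).symm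
  rw [h1]
  ring


lemma arith_key (Kz nz mz A S a : ℤ) (hn0 : 0 ≤ nz) (hm0 : 0 ≤ mz)
    (hA0 : 0 ≤ A) (hAm : A ≤ mz) (hAS : A ≤ S) (ha0 : 0 ≤ a) (ha1 : a ≤ 1)
    (H : (2 * Kz * (nz + mz) - 1) * (nz + A)
        + -2 * (nz + mz) * ((Kz + 1) * nz + S - (nz + A)) + (nz + mz) * a ≤ 0) :
    (2 * Kz * mz - 1) * A + -2 * mz * (S - A) + mz * a ≤ 0 := by
  set T : ℤ := Kz * A - (S - A) with hT
  have Hkey : 2 * (nz + mz) * T - A - nz + (nz + mz) * a ≤ 0 := by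
    rw [hT]; nlinarith [H]
  have goal' : 2 * mz * T - A + mz * a ≤ 0 := by
    rcases (by omega : a = 0 ∨ a = 1) with h | h <;> rw [h] at Hkey ⊢
    · rcases le_or_gt T 0 with hT0 | hT0
      · nlinarith
      · have hT1 : 1 ≤ T := hT0
        nlinarith [mul_nonneg hn0 (by linarith : (0 : ℤ) ≤ T - 1)]
    · rcases le_or_gt T 0 with hT0 | hT0
      · rcases le_or_gt T (-1) with hT1 | hT1
        · nlinarith [mul_nonneg hm0 (by linarith : (0 : ℤ) ≤ -T - 1)]
        · have hTeq : T = 0 := by omega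
          rw [hTeq] at Hkey ⊢
          nlinarith
      · have hT1 : 1 ≤ T := hT0
        nlinarith
  rw [hT] at goal'
  nlinarith [goal']

/-- Let `Q^K` be the cyclic quiver with `K+1` vertices, doubled and
framed (framing vertex `∞` with arrow `∞ → 0` and its reverse, framing space `ℂ`).
Let `ζ^l` be the stability condition `ζ^l₀ = 2Kl - 1`, `ζ^lᵢ = -2l` (`i ≥ 1`),
`ζ^l_∞ = l`.  If `ρ` (with spaces `V i`, arrows `x, y`, framing maps `fr, cofr`) is a
`ζ^{n+m}`-semistable framed representation of dimension `((n+m)·δ, 1)` — expressed by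
saying that every subrepresentation `(W, Wfr)` satisfies `χ_{n+m}(W, Wfr) ≤ 0` — then
any quotient representation `ρ'` (spaces `V' i`, a surjective homomorphism `φ, φfr`)
of dimension `(m·δ, 1)` is `ζ^m`-semistable: every subrepresentation `(W', Wfr')` of
`ρ'` satisfies `χ_m(W', Wfr') ≤ 0`. -/
theorem stmt_11 (K m n : ℕ)
    (V V' : Fin (K + 1) → Type)
    [∀ i, AddCommGroup (V i)] [∀ i, Module ℂ (V i)] [∀ i, FiniteDimensional ℂ (V i)]
    [∀ i, AddCommGroup (V' i)] [∀ i, Module ℂ (V' i)] [∀ i, FiniteDimensional ℂ (V' i)]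
    (x : ∀ i, V i →ₗ[ℂ] V (i + 1)) (y : ∀ i, V (i + 1) →ₗ[ℂ] V i)
    (fr : ℂ →ₗ[ℂ] V 0) (cofr : V 0 →ₗ[ℂ] ℂ)
    (x' : ∀ i, V' i →ₗ[ℂ] V' (i + 1)) (y' : ∀ i, V' (i + 1) →ₗ[ℂ] V' i)
    (fr' : ℂ →ₗ[ℂ] V' 0) (cofr' : V' 0 →ₗ[ℂ] ℂ)
    -- the surjection `π : ρ → ρ'`:
    (φ : ∀ i, V i →ₗ[ℂ] V' i) (φfr : ℂ →ₗ[ℂ] ℂ)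
    (hφx : ∀ i v, φ (i + 1) (x i v) = x' i (φ i v))
    (hφy : ∀ i v, φ i (y i v) = y' i (φ (i + 1) v))
    (hφfr : ∀ c, φ 0 (fr c) = fr' (φfr c))
    (hφcofr : ∀ v, φfr (cofr v) = cofr' (φ 0 v))
    (hsurj : ∀ i, Function.Surjective (φ i)) (hfrsurj : Function.Surjective φfr)
    -- dimension vectors `((n+m)·δ, 1)` and `(m·δ, 1)`:
    (hdim : ∀ i, finrank ℂ (V i) = n + m) (hdim' : ∀ i, finrank ℂ (V' i) = m)
    -- `ζ^{n+m}`-semistability of `ρ`: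
    (hss : ∀ (W : ∀ i, Submodule ℂ (V i)) (Wfr : Submodule ℂ ℂ),
      (∀ i, (W i).map (x i) ≤ W (i + 1)) →
      (∀ i, (W (i + 1)).map (y i) ≤ W i) →
      Wfr.map fr ≤ W 0 → (W 0).map cofr ≤ Wfr →
      (∑ i : Fin (K + 1),
          (if i = 0 then (2 * (K : ℤ) * (n + m) - 1) else -2 * ((n : ℤ) + m)) *
            (finrank ℂ (W i) : ℤ))
        + ((n : ℤ) + m) * (finrank ℂ Wfr : ℤ) ≤ 0) :
    -- conclusion: `ζ^m`-semistability of `ρ'`: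
    ∀ (W' : ∀ i, Submodule ℂ (V' i)) (Wfr' : Submodule ℂ ℂ),
      (∀ i, (W' i).map (x' i) ≤ W' (i + 1)) →
      (∀ i, (W' (i + 1)).map (y' i) ≤ W' i) →
      Wfr'.map fr' ≤ W' 0 → (W' 0).map cofr' ≤ Wfr' →
      (∑ i : Fin (K + 1),
          (if i = 0 then (2 * (K : ℤ) * m - 1) else -2 * (m : ℤ)) *
            (finrank ℂ (W' i) : ℤ))
        + (m : ℤ) * (finrank ℂ Wfr' : ℤ) ≤ 0 := by
  intro W' Wfr' hx' hy' hfr' hcofr'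
  classical
  -- the preimage subrepresentation
  set W : ∀ i, Submodule ℂ (V i) := fun i => (W' i).comap (φ i) with hWdef
  set Wfr : Submodule ℂ ℂ := Wfr'.comap φfr with hWfrdef
  have hx : ∀ i, (W i).map (x i) ≤ W (i + 1) := by
    rintro i _ ⟨v, hv, rfl⟩
    show φ (i + 1) (x i v) ∈ W' (i + 1)
    rw [hφx]
    exact hx' i ⟨φ i v, hv, rfl⟩
  have hy : ∀ i, (W (i + 1)).map (y i) ≤ W i := by
    rintro i _ ⟨v, hv, rfl⟩
    show φ i (y i v) ∈ W' i
    rw [hφy]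
    exact hy' i ⟨φ (i + 1) v, hv, rfl⟩
  have hfr : Wfr.map fr ≤ W 0 := by
    rintro _ ⟨c, hc, rfl⟩
    show φ 0 (fr c) ∈ W' 0
    rw [hφfr]
    exact hfr' ⟨φfr c, hc, rfl⟩
  have hcofr : (W 0).map cofr ≤ Wfr := by
    rintro _ ⟨v, hv, rfl⟩
    show φfr (cofr v) ∈ Wfr'
    rw [hφcofr]
    exact hcofr' ⟨φ 0 v, hv, rfl⟩
  -- dimension computations
  have hker : ∀ i, finrank ℂ (LinearMap.ker (φ i)) = n := by
    intro i
    have h1 := LinearMap.finrank_range_add_finrank_ker (φ i)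
    rw [LinearMap.range_eq_top.mpr (hsurj i), finrank_top] at h1
    rw [hdim i, hdim' i] at h1
    omega
  have hW : ∀ i, finrank ℂ (W i) = n + finrank ℂ (W' i) := by
    intro i
    rw [hWdef, finrank_comap_of_surj _ (hsurj i), hker i]
  have hkerfr : finrank ℂ (LinearMap.ker φfr) = 0 := by
    have h1 := LinearMap.finrank_range_add_finrank_ker φfr
    rw [LinearMap.range_eq_top.mpr hfrsurj, finrank_top, finrank_self] at h1
    omega
  have hWfr : finrank ℂ Wfr = finrank ℂ Wfr' := by
    rw [hWfrdef, finrank_comap_of_surj _ hfrsurj, hkerfr]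
    omega
  have H := hss W Wfr hx hy hfr hcofr
  rw [sum_if_split] at H
  rw [sum_if_split]
  have hW0 : (finrank ℂ (W 0) : ℤ) = (n : ℤ) + (finrank ℂ (W' 0) : ℤ) := by
    rw [hW 0]; push_cast; ring
  have hsumW : ∑ i : Fin (K + 1), (finrank ℂ (W i) : ℤ)
      = ((K : ℤ) + 1) * n + ∑ i : Fin (K + 1), (finrank ℂ (W' i) : ℤ) := by
    simp_rw [hW]
    push_cast
    rw [Finset.sum_add_distrib, Finset.sum_const, Finset.card_univ, Fintype.card_fin]
    push_cast
    ring
  rw [hsumW, hW0, hWfr] at H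
  have hAm : (finrank ℂ (W' 0) : ℤ) ≤ (m : ℤ) := by
    exact_mod_cast (hdim' 0) ▸ Submodule.finrank_le (W' 0)
  have hA0 : (0 : ℤ) ≤ (finrank ℂ (W' 0) : ℤ) := by positivity
  have hAS : (finrank ℂ (W' 0) : ℤ) ≤ ∑ i : Fin (K + 1), (finrank ℂ (W' i) : ℤ) :=
    Finset.single_le_sum (f := fun i : Fin (K + 1) => ((finrank ℂ (W' i) : ℤ)))
      (fun i _ => by positivity) (Finset.mem_univ 0)
  have ha0 : (0 : ℤ) ≤ (finrank ℂ Wfr' : ℤ) := by positivity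
  have ha1 : (finrank ℂ Wfr' : ℤ) ≤ 1 := by
    exact_mod_cast (finrank_self ℂ) ▸ Submodule.finrank_le Wfr'
  have key := arith_key K n m (finrank ℂ (W' 0) : ℤ)
    (∑ i : Fin (K + 1), (finrank ℂ (W' i) : ℤ)) (finrank ℂ Wfr' : ℤ)
    (by positivity) (by positivity) hA0 hAm hAS ha0 ha1 H
  linarith [key]
end

section
/- In the shuffle algebra of the tripled cyclic quiver: let the degree-\delta_i component be \mathbb{C}[t_1,t_2][x_{i,1}] and consider the shuffle product with kernel determined by \bar\omega^{CoHA}_{i,j}(z,w) = (w-z+t_1)^{\delta_{j,i+1}} (w-z+t_2)^{\delta_{j,i-1}} ((w-z-t_1-t_2)/(w-z))^{\delta_{j,i}}. If f(x_{0,1},\dots,x_{K,1}) is a polynomial of multidegree \delta = (1,\dots,1) which commutes (under the shuffle product) with the element 1 in each degree-\delta_i component for every i \in \{0,\dots,K\} (K \ge 2), then f is independent of all variables x_{i,1}, i.e. f \in \mathbb{C}[t_1,t_2]. -/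
noncomputable section

/-- The big polynomial ring `ℂ[t₁, t₂, x_{i,1}, x_{i,2} : i ∈ ℤ/(K+1)]`. -/
abbrev BigP (K : ℕ) : Type :=
  MvPolynomial ((Fin (K + 1)) ⊕ (Fin (K + 1)) ⊕ (Fin 2)) ℂ

/-- Its field of rational functions. -/
abbrev FF (K : ℕ) : Type := FractionRing (BigP K)

/-- The variable `x_{i,1}`. -/
def x1 (K : ℕ) (i : Fin (K + 1)) : FF K :=
  algebraMap (BigP K) (FF K) (MvPolynomial.X (Sum.inl i))

/-- The variable `x_{i,2}`. -/
def x2 (K : ℕ) (i : Fin (K + 1)) : FF K :=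
  algebraMap (BigP K) (FF K) (MvPolynomial.X (Sum.inr (Sum.inl i)))

/-- The equivariant parameters `t₁, t₂`. -/
def tt (K : ℕ) (r : Fin 2) : FF K :=
  algebraMap (BigP K) (FF K) (MvPolynomial.X (Sum.inr (Sum.inr r)))

/-- Evaluation of a polynomial `f` in the variables `x_{i,1}` (one per vertex) and
`t₁, t₂` at a tuple `v` of rational functions (with `t₁, t₂` sent to themselves). -/
def ev (K : ℕ) (f : MvPolynomial (Fin (K + 1) ⊕ Fin 2) ℂ)
    (v : Fin (K + 1) → FF K) : FF K :=
  MvPolynomial.eval₂ ((algebraMap (BigP K) (FF K)).comp MvPolynomial.C)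
    (Sum.elim v (tt K)) f

/- ### Auxiliary lemmas -/

/-- The key field computation: the shuffle-commutation identity, after clearing
denominators, factors as `(F - G) · Q · (z - w) = 0`; if `Q ≠ 0` we get `F = G`. -/
theorem core_field {k : Type*} [Field k] (F G z w a b t0 t1 : k) (hzw : z ≠ w)
    (h : F * ((w - z - t0 - t1) * (w - a + t0) * (w - b + t1)) / (w - z)
        + G * ((z - w - t0 - t1) * (z - a + t0) * (z - b + t1)) / (z - w)
      = G * ((w - z - t0 - t1) * (b - z + t0) * (a - z + t1)) / (w - z)
        + F * ((z - w - t0 - t1) * (b - w + t0) * (a - w + t1)) / (z - w))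
    (hQ : (t0 + t1) * (-(2:k)*t0*t1 + (b - a)*(t0 - t1) - 2*a*b + (a+b)*(z+w) - 2*z*w) ≠ 0) :
    F = G := by
  have hwz : w - z ≠ 0 := sub_ne_zero.mpr (Ne.symm hzw)
  have hzw' : z - w ≠ 0 := sub_ne_zero.mpr hzw
  field_simp at h
  have key : (F - G) * ((t0 + t1) * (-(2:k)*t0*t1 + (b - a)*(t0 - t1) - 2*a*b
      + (a+b)*(z+w) - 2*z*w)) * (z-w) = 0 * (z-w) := by
    rw [zero_mul]
    linear_combination h
  have h2 := mul_right_cancel₀ hzw' key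
  exact sub_eq_zero.mp ((mul_eq_zero.mp h2).resolve_right hQ)

open MvPolynomial in
/-- If the evaluation point is itself given by variables, `ev` is an (injected) rename. -/
theorem ev_eq_rename (K : ℕ) (f : MvPolynomial (Fin (K + 1) ⊕ Fin 2) ℂ)
    (e : (Fin (K+1) ⊕ Fin 2) → (Fin (K + 1)) ⊕ (Fin (K + 1)) ⊕ (Fin 2))
    (v : Fin (K + 1) → FF K)
    (hv : ∀ s, Sum.elim v (tt K) s = algebraMap (BigP K) (FF K) (X (e s))) :
    ev K f v = algebraMap (BigP K) (FF K) (rename e f) := by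
  have h1 : rename e f = eval₂ C (X ∘ e) f := by
    rw [rename_eq_aeval, aeval_def, algebraMap_eq]
  rw [h1, eval₂_comp_left ((algebraMap (BigP K) (FF K)) : BigP K →+* FF K) C (X ∘ e) f, ev]
  congr 1
  funext s
  exact hv s

theorem fin_sub_one_ne (k : ℕ) (i : Fin (k+3)) : ¬ (i = i - 1) := by
  intro h
  have h1 : (1 : Fin (k+3)) = 0 := by
    have := congrArg (· + 1) h
    simpa [sub_add_cancel] using congrArg (fun x => x - i) this.symm
  exact one_ne_zero h1

theorem fin_add_one_ne_sub_one (k : ℕ) (i : Fin (k+3)) : ¬ (i + 1 = i - 1) := by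
  intro h
  have h2 : (2 : Fin (k+3)) = 0 := by
    have := congrArg (· + 1) h
    simp only [sub_add_cancel] at this
    have := congrArg (fun x => x - i) this
    simp only [add_assoc] at this
    simpa [one_add_one_eq_two, add_sub_cancel_left,
      show (1 + 1 : Fin (k+3)) = 2 by ext; simp [Fin.val_add]] using this
  have hv : ((2 : Fin (k+3))).val = 2 := by
    rw [show (2 : Fin (k+3)) = 1 + 1 by ext; simp [Fin.val_add], Fin.add_def]
    simp [Nat.mod_eq_of_lt]
  rw [h2] at hv
  simp at hv

/-- The first renaming: `x_j ↦ x_{j,1}`, `t_r ↦ t_r`. -/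
def emb1 (K : ℕ) : (Fin (K+1) ⊕ Fin 2) → (Fin (K + 1)) ⊕ (Fin (K + 1)) ⊕ (Fin 2) :=
  Sum.elim Sum.inl (fun r => Sum.inr (Sum.inr r))

/-- The second renaming: like `emb1` but `x_i ↦ x_{i,2}`. -/
def emb2 (K : ℕ) (i : Fin (K+1)) :
    (Fin (K+1) ⊕ Fin 2) → (Fin (K + 1)) ⊕ (Fin (K + 1)) ⊕ (Fin 2) :=
  Sum.elim (fun j => if j = i then Sum.inr (Sum.inl i) else Sum.inl j)
    (fun r => Sum.inr (Sum.inr r))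

set_option maxHeartbeats 2000000
set_option synthInstance.maxHeartbeats 400000
/-- In the shuffle algebra of the tripled cyclic quiver (with kernel
`ω̄^{CoHA}`), suppose `f = f(x_{0,1}, …, x_{K,1})` (a polynomial over `ℂ[t₁,t₂]`, of
quiver multidegree `δ`) commutes under the shuffle product with the element `1` of
each degree-`δᵢ` component, `i ∈ {0, …, K}`, `K ≥ 2`; that is, for each `i` the two
displayed shuffle expressions `f ⋆ 1` and `1 ⋆ f` agree.  Then `f` is independent of
all the variables `x_{i,1}`, i.e. `f ∈ ℂ[t₁, t₂]`. -/
theorem stmt_14 (K : ℕ) (hK : 2 ≤ K)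
    (f : MvPolynomial (Fin (K + 1) ⊕ Fin 2) ℂ)
    (hcomm : ∀ i : Fin (K + 1),
      ev K f (fun j => x1 K j) *
          ((x2 K i - x1 K i - tt K 0 - tt K 1) * (x2 K i - x1 K (i - 1) + tt K 0) *
            (x2 K i - x1 K (i + 1) + tt K 1)) / (x2 K i - x1 K i)
        + ev K f (fun j => if j = i then x2 K i else x1 K j) *
          ((x1 K i - x2 K i - tt K 0 - tt K 1) * (x1 K i - x1 K (i - 1) + tt K 0) *
            (x1 K i - x1 K (i + 1) + tt K 1)) / (x1 K i - x2 K i)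
      =
      ev K f (fun j => if j = i then x2 K i else x1 K j) *
          ((x2 K i - x1 K i - tt K 0 - tt K 1) * (x1 K (i + 1) - x1 K i + tt K 0) *
            (x1 K (i - 1) - x1 K i + tt K 1)) / (x2 K i - x1 K i)
        + ev K f (fun j => x1 K j) *
          ((x1 K i - x2 K i - tt K 0 - tt K 1) * (x1 K (i + 1) - x2 K i + tt K 0) *
            (x1 K (i - 1) - x2 K i + tt K 1)) / (x1 K i - x2 K i)) :
    ∃ g : MvPolynomial (Fin 2) ℂ, f = MvPolynomial.rename Sum.inr g := by
  classical
  obtain ⟨k, rfl⟩ : ∃ k, K = k + 2 := ⟨K - 2, by omega⟩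
  let K := k + 2
  show ∃ g : MvPolynomial (Fin 2) ℂ, f = MvPolynomial.rename Sum.inr g
  have hinj : Function.Injective (algebraMap (BigP K) (FF K)) :=
    IsFractionRing.injective (BigP K) (FF K)
  -- Step 1: for each i, f(x_{i,1}) = f(x_{i,2}), i.e. the two renames agree.
  have hr : ∀ i : Fin (K+1),
      MvPolynomial.rename (emb1 K) f = MvPolynomial.rename (emb2 K i) f := by
    intro i
    have hii : ¬ (i = i - 1) := fin_sub_one_ne k i
    have hip : ¬ (i + 1 = i - 1) := fin_add_one_ne_sub_one k i
    -- the quadratic kernel factor, as a polynomial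
    set qB : BigP K :=
      (MvPolynomial.X (Sum.inr (Sum.inr 0)) + MvPolynomial.X (Sum.inr (Sum.inr 1))) *
        (-(2:BigP K) * MvPolynomial.X (Sum.inr (Sum.inr 0)) * MvPolynomial.X (Sum.inr (Sum.inr 1))
          + (MvPolynomial.X (Sum.inl (i+1)) - MvPolynomial.X (Sum.inl (i-1))) *
              (MvPolynomial.X (Sum.inr (Sum.inr 0)) - MvPolynomial.X (Sum.inr (Sum.inr 1)))
          - 2 * MvPolynomial.X (Sum.inl (i-1)) * MvPolynomial.X (Sum.inl (i+1))
          + (MvPolynomial.X (Sum.inl (i-1)) + MvPolynomial.X (Sum.inl (i+1))) *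
              (MvPolynomial.X (Sum.inl i) + MvPolynomial.X (Sum.inr (Sum.inl i)))
          - 2 * MvPolynomial.X (Sum.inl i) * MvPolynomial.X (Sum.inr (Sum.inl i))) with hqB
    have hmap : (tt K 0 + tt K 1) * (-(2:FF K)*(tt K 0)*(tt K 1)
          + (x1 K (i+1) - x1 K (i-1))*(tt K 0 - tt K 1)
          - 2*(x1 K (i-1))*(x1 K (i+1))
          + (x1 K (i-1) + x1 K (i+1))*(x1 K i + x2 K i)
          - 2*(x1 K i)*(x2 K i))
        = algebraMap (BigP K) (FF K) qB := by
      simp only [hqB, x1, x2, tt, map_mul, map_add, map_sub, map_neg, map_ofNat]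
    have hq0 : qB ≠ 0 := by
      intro h0
      have := congrArg (MvPolynomial.eval
        (fun v => if v = Sum.inl (i-1) ∨ v = Sum.inr (Sum.inr 0) then (1:ℂ) else 0)) h0
      simp [hqB, hii, hip, Fin.one_eq_zero_iff] at this
    have hQ : (tt K 0 + tt K 1) * (-(2:FF K)*(tt K 0)*(tt K 1)
          + (x1 K (i+1) - x1 K (i-1))*(tt K 0 - tt K 1)
          - 2*(x1 K (i-1))*(x1 K (i+1))
          + (x1 K (i-1) + x1 K (i+1))*(x1 K i + x2 K i)
          - 2*(x1 K i)*(x2 K i)) ≠ 0 := by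
      rw [hmap]
      intro h
      exact hq0 (hinj (h.trans (map_zero _).symm))
    have hzw : x1 K i ≠ x2 K i := by
      intro h
      have := MvPolynomial.X_injective (hinj h)
      simp at this
    have hFG : ev K f (fun j => x1 K j)
        = ev K f (fun j => if j = i then x2 K i else x1 K j) :=
      core_field _ _ (x1 K i) (x2 K i) (x1 K (i-1)) (x1 K (i+1)) (tt K 0) (tt K 1)
        hzw (hcomm i) hQ
    have hF : ev K f (fun j => x1 K j)
        = algebraMap (BigP K) (FF K) (MvPolynomial.rename (emb1 K) f) := by
      apply ev_eq_rename
      rintro (j | r) <;> rfl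
    have hG : ev K f (fun j => if j = i then x2 K i else x1 K j)
        = algebraMap (BigP K) (FF K) (MvPolynomial.rename (emb2 K i) f) := by
      apply ev_eq_rename
      rintro (j | r)
      · by_cases hj : j = i <;> simp [emb2, hj, x1, x2]
      · rfl
    apply hinj
    rw [← hF, ← hG, hFG]
  -- Step 2: injectivity of emb1
  have hinj1 : Function.Injective (emb1 K) := by
    rintro (a | a) (b | b) h <;> simp [emb1] at h <;> simp [h]
  -- Step 3: no exponent on any x_{i,1}
  have hzero : ∀ i : Fin (K+1), ∀ m ∈ f.support, m (Sum.inl i) = 0 := by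
    intro i m hm
    have hmne : MvPolynomial.coeff m f ≠ 0 := (MvPolynomial.mem_support_iff).mp hm
    have h1 : MvPolynomial.coeff (m.mapDomain (emb1 K)) (MvPolynomial.rename (emb1 K) f)
        = MvPolynomial.coeff m f :=
      MvPolynomial.coeff_rename_mapDomain _ hinj1 f m
    rw [hr i] at h1
    obtain ⟨u, hu, -⟩ := MvPolynomial.coeff_rename_ne_zero _ _ _ (h1.trans_ne hmne)
    have e1 : (m.mapDomain (emb1 K)) (Sum.inl i) = m (Sum.inl i) := by
      have h' : (Sum.inl i : (Fin (K+1)) ⊕ (Fin (K+1)) ⊕ (Fin 2)) = emb1 K (Sum.inl i) := rfl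
      rw [h', Finsupp.mapDomain_apply hinj1]
    have e2 : (u.mapDomain (emb2 K i)) (Sum.inl i) = 0 := by
      apply Finsupp.mapDomain_notin_range
      rintro ⟨(j | r), hj⟩
      · by_cases hji : j = i <;> simp [emb2, hji] at hj
      · simp [emb2] at hj
    rw [← e1, ← hu, e2]
  -- Step 4: conclude
  have hvars : (f.vars : Set (Fin (K+1) ⊕ Fin 2)) ⊆ Set.range Sum.inr := by
    intro v hv
    obtain ⟨m, hm, hvm⟩ := (MvPolynomial.mem_vars v).mp hv
    cases v with
    | inl i =>
      exact absurd (hzero i m hm) (Finsupp.mem_support_iff.mp hvm)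
    | inr r => exact ⟨r, rfl⟩
  obtain ⟨g, hg⟩ := f.exists_rename_eq_of_vars_subset_range Sum.inr Sum.inr_injective hvars
  exact ⟨g, hg.symm⟩

end
end

section
/- Define in the Lie algebra \mathcal{W}_{K+1}^+ (over \mathbb{C}[\hbar]) the element P_{K+1} = \frac{(K+1)^2}{2} t_{0,2} + (K+1) T_{0,1}(H'_{K+1}) + (K+1)\hbar\, T_{0,0}(H''_{K+1}), where H'_{K+1} = \sum_{i=1}^{K+1}(K + 3/2 - i) E_{i,i} and H''_{K+1} = \sum_i \mu_i E_{i,i} with \mu_i - \mu_{i+1} = 1 - i/(K+1) and \sum_i \mu_i = 0. Then for all r \ge 0: \mathrm{ad}_{P_{K+1}}^r(T_{1,0}(E_{K+1,1})) = (K+1)^r\, D^r z \otimes E_{K+1,1} and \mathrm{ad}_{P_{K+1}}^r(T_{0,0}(E_{i,i+1})) = (K+1)^r (D + (1 - i/(K+1))\hbar)^r \otimes E_{i,i+1} for 1 \le i \le K. -/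
open Matrix

/-- In the Lie algebra `𝒲_{K+1}⁺` of matrix `ħ`-differential
operators (modelled in `Matrix (Fin (K+1)) (Fin (K+1)) A` where `A` is a ring with
`z^{±1}, D, ħ, ħ⁻¹` and `D z = z (D + ħ)`, `ħ` central), define
`P_{K+1} = ((K+1)²/2) t_{0,2} + (K+1) T_{0,1}(H'_{K+1}) + (K+1) ħ T_{0,0}(H''_{K+1})`,
where `H'_{K+1} = ∑ᵢ (K + 3/2 - i) E_{i,i}` and `H''_{K+1} = diag(μ)` with
`μᵢ - μ_{i+1} = 1 - i/(K+1)` and `∑ μᵢ = 0`.  Then for all `r ≥ 0`: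
`ad_{P}^r (T_{1,0}(E_{K+1,1})) = (K+1)^r D^r z ⊗ E_{K+1,1}` and
`ad_{P}^r (T_{0,0}(E_{i,i+1})) = (K+1)^r (D + (1 - i/(K+1)) ħ)^r ⊗ E_{i,i+1}`
for `1 ≤ i ≤ K`. -/
theorem stmt_15 (K : ℕ) {A : Type*} [Ring A] [Algebra ℚ A]
    (z zinv D h hinv : A)
    (hrel : D * z = z * (D + h))
    (hz1 : z * zinv = 1) (hz2 : zinv * z = 1)
    (hcentral : ∀ x : A, h * x = x * h)
    (hh1 : h * hinv = 1) (hh2 : hinv * h = 1)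
    (Z : ℤ → A)
    (hZ : ∀ m : ℤ, Z m = if 0 ≤ m then z ^ m.toNat else zinv ^ (-m).toNat)
    (T : ℤ → ℕ → Matrix (Fin (K + 1)) (Fin (K + 1)) ℚ →
      Matrix (Fin (K + 1)) (Fin (K + 1)) A)
    (hT : ∀ k a X i j, T k a X i j = Z k * D ^ a * algebraMap ℚ A (X i j))
    (t : ℤ → ℕ → Matrix (Fin (K + 1)) (Fin (K + 1)) A)
    (ht : ∀ k a i j, t k a i j = if i = j then hinv * Z k * D ^ a else 0)
    (μ : Fin (K + 1) → ℚ)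
    (hμ1 : ∀ i : Fin K,
      μ i.castSucc - μ i.succ = 1 - ((i.val : ℚ) + 1) / ((K : ℚ) + 1))
    (hμ2 : ∑ i, μ i = 0)
    (H' : Matrix (Fin (K + 1)) (Fin (K + 1)) ℚ)
    (hH' : H' = Matrix.diagonal fun i => (K : ℚ) + 3 / 2 - ((i.val : ℚ) + 1))
    (P : Matrix (Fin (K + 1)) (Fin (K + 1)) A)
    (hP : P = (((K : ℚ) + 1) ^ 2 / 2) • t 0 2 + ((K : ℚ) + 1) • T 0 1 H'
        + ((K : ℚ) + 1) • (h • T 0 0 (Matrix.diagonal μ))) :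
    ∀ r : ℕ,
      ((fun X => P * X - X * P)^[r]
          (T 1 0 (Matrix.single (Fin.last K) 0 1)) =
        (((K : ℚ) + 1) ^ r) • Matrix.of (fun i j =>
          D ^ r * z * algebraMap ℚ A (Matrix.single (Fin.last K) 0 1 i j))) ∧
      (∀ i : Fin K,
        (fun X => P * X - X * P)^[r]
            (T 0 0 (Matrix.single i.castSucc i.succ 1)) =
          (((K : ℚ) + 1) ^ r) • Matrix.of (fun p q =>
            (D + algebraMap ℚ A (1 - ((i.val : ℚ) + 1) / ((K : ℚ) + 1)) * h) ^ r *
              algebraMap ℚ A (Matrix.single i.castSucc i.succ 1 p q))) := by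
  -- notation
  set eA : ℚ →+* A := algebraMap ℚ A with heA
  -- centrality facts
  have hcen' : ∀ x : A, hinv * x = x * hinv := by
    intro x
    calc hinv * x = hinv * ((x * h) * hinv) := by rw [mul_assoc, hh1, mul_one]
      _ = hinv * (h * (x * hinv)) := by rw [← hcentral, mul_assoc]
      _ = x * hinv := by rw [← mul_assoc, hh2, one_mul]
  have hZ0 : Z 0 = 1 := by simp [hZ]
  have hZ1 : Z 1 = z := by simp [hZ]
  -- D^n z = z (D+h)^n
  have hDz : ∀ n : ℕ, D ^ n * z = z * (D + h) ^ n := by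
    intro n
    induction n with
    | zero => simp
    | succ n ih =>
      rw [pow_succ', mul_assoc, ih, ← mul_assoc, hrel, mul_assoc, ← pow_succ']
  -- the diagonal entries of P
  set f : Fin (K + 1) → A := fun i =>
    (((K : ℚ) + 1) ^ 2 / 2) • (hinv * D ^ 2)
      + ((((K : ℚ) + 1)) * ((K : ℚ) + 3 / 2 - ((i.val : ℚ) + 1))) • D
      + ((((K : ℚ) + 1)) * μ i) • h with hf
  have e1 : ∀ (a b : ℚ) (x : A), a • (x * eA b) = (a * b) • x := by
    intro a b x
    rw [Algebra.smul_def, Algebra.smul_def, _root_.map_mul, mul_assoc, ← Algebra.commutes]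
  have hPd : ∀ p q, P p q = if p = q then f p else 0 := by
    intro p q
    rw [hP]
    by_cases hpq : p = q
    · subst hpq
      rw [if_pos rfl, hf]
      simp only [Matrix.add_apply, Matrix.smul_apply, ht, hT, hH',
        Matrix.diagonal_apply_eq, hZ0, smul_eq_mul, if_pos rfl, one_mul, mul_one,
        pow_zero, pow_one]
      rw [e1, e1]
      simp
    · rw [if_neg hpq]
      simp [Matrix.add_apply, ht, hT, hH', Matrix.diagonal_apply_ne _ hpq, hpq]
  -- the key bracket computation
  have key : ∀ (a b : Fin (K + 1)) (m : A)
      (G : Matrix (Fin (K + 1)) (Fin (K + 1)) A),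
      (∀ p q, G p q = m * eA (Matrix.single a b (1 : ℚ) p q)) →
      ∀ p q, (P * G - G * P) p q
        = (f a * m - m * f b) * eA (Matrix.single a b (1 : ℚ) p q) := by
    intro a b m G hG p q
    have hsum1 : (P * G) p q = f p * G p q := by
      rw [Matrix.mul_apply,
        Finset.sum_congr rfl (fun k _ => by rw [hPd p k, ite_mul, zero_mul]),
        Finset.sum_ite_eq]
      simp
    have hsum2 : (G * P) p q = G p q * f q := by
      rw [Matrix.mul_apply,
        Finset.sum_congr rfl (fun k _ => by rw [hPd k q, mul_ite, mul_zero]),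
        Finset.sum_ite_eq']
      simp
    rw [Matrix.sub_apply, hsum1, hsum2, hG]
    by_cases hpa : p = a
    · by_cases hqb : q = b
      · subst hpa; subst hqb
        simp [Matrix.single_apply_same]
      · have h0 : Matrix.single a b (1 : ℚ) p q = 0 := by
          simp only [Matrix.single, Matrix.of_apply, ite_eq_right_iff, and_imp]
          intro _ hb
          exact absurd hb.symm hqb
        rw [h0]
        simp
    · have h0 : Matrix.single a b (1 : ℚ) p q = 0 := by
        simp only [Matrix.single, Matrix.of_apply, ite_eq_right_iff, and_imp]
        intro ha _
        exact absurd ha.symm hpa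
      rw [h0]
      simp
  -- telescoping for μ
  have hμd : μ 0 - μ (Fin.last K) = (K : ℚ) / 2 := by
    set g : ℕ → ℚ := fun n => μ ⟨n % (K + 1), Nat.mod_lt _ (Nat.succ_pos K)⟩ with hg
    have tele : ∑ i ∈ Finset.range K, (g i - g (i + 1)) = g 0 - g K :=
      Finset.sum_range_sub' g K
    have conv : ∑ i : Fin K, (1 - ((i.val : ℚ) + 1) / ((K : ℚ) + 1))
        = ∑ i ∈ Finset.range K, (g i - g (i + 1)) := by
      rw [← Fin.sum_univ_eq_sum_range (fun n => g n - g (n + 1)) K]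
      refine Finset.sum_congr rfl fun i _ => ?_
      rw [← hμ1 i]
      congr 1
      · congr 1
        apply Fin.ext
        simp [hg, Nat.mod_eq_of_lt (lt_trans i.isLt (Nat.lt_succ_self K))]
      · congr 1
        apply Fin.ext
        simp [hg, Fin.val_succ, Nat.mod_eq_of_lt (Nat.succ_lt_succ i.isLt)]
    have hg0 : g 0 = μ 0 := by simp [hg]
    have hgK : g K = μ (Fin.last K) := by
      simp only [hg]
      congr 1
      apply Fin.ext
      simp [Nat.mod_eq_of_lt (Nat.lt_succ_self K), Fin.val_last]
    have gauss : ∀ n : ℕ, ∑ i ∈ Finset.range n, ((i : ℚ) + 1) = n * (n + 1) / 2 := by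
      intro n
      induction n with
      | zero => simp
      | succ n ih =>
        rw [Finset.sum_range_succ, ih]
        push_cast
        ring
    have sum2 : ∑ i : Fin K, (1 - ((i.val : ℚ) + 1) / ((K : ℚ) + 1)) = (K : ℚ) / 2 := by
      rw [Fin.sum_univ_eq_sum_range (fun n => 1 - ((n : ℚ) + 1) / ((K : ℚ) + 1)) K,
        Finset.sum_sub_distrib, Finset.sum_const, Finset.card_range, ← Finset.sum_div,
        gauss K]
      have hK : ((K : ℚ) + 1) ≠ 0 := by positivity
      field_simp
      ring
    rw [← hg0, ← hgK, ← tele, ← conv, sum2]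
  -- scalar identity for claim 1
  have S1 : ∀ r : ℕ, f (Fin.last K) * (D ^ r * z) - (D ^ r * z) * f 0
      = eA ((K : ℚ) + 1) * (D ^ (r + 1) * z) := by
    intro r
    have cDh : Commute D h := (hcentral D).symm
    have cDhi : Commute D hinv := (hcen' D).symm
    have chhi : Commute h hinv := (hcen' h).symm
    set u : A := (D + h) ^ r with hu
    have cuhi : Commute u hinv := by
      rw [hu]; exact (cDhi.add_left chhi).pow_left r
    have cuh : Commute u h := by
      rw [hu]; exact (cDh.add_left (Commute.refl h)).pow_left r
    have P3 : D * (D ^ r * z) = z * (u * D) + z * (u * h) := by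
      rw [← mul_assoc, ← pow_succ', hDz (r + 1), pow_succ, ← hu, mul_add u, mul_add z]
    have P4 : (D ^ r * z) * D = z * (u * D) := by rw [hDz r, ← hu, mul_assoc]
    have P6 : (D ^ r * z) * h = z * (u * h) := by rw [hDz r, ← hu, mul_assoc]
    have P5 : h * (D ^ r * z) = z * (u * h) := by rw [hcentral, P6]
    have sq : (D + h) * (D + h) = D * D + h * (D + D + h) := by
      rw [mul_add, add_mul, add_mul, ← hcentral D, mul_add, mul_add]
      abel
    have PX : (hinv * D ^ 2) * (D ^ r * z)
        = (D ^ r * z) * (hinv * D ^ 2) + (z * (u * D) + (z * (u * D) + z * (u * h))) := by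
      have l1 : (hinv * D ^ 2) * (D ^ r * z) = z * (hinv * (u * ((D + h) * (D + h)))) := by
        rw [mul_assoc, ← mul_assoc (D ^ 2), ← pow_add, hDz (2 + r), ← mul_assoc,
          hcen' z, mul_assoc, Nat.add_comm 2 r, pow_add, ← hu, pow_two]
      have l2 : (D ^ r * z) * (hinv * D ^ 2) = z * (hinv * (u * (D * D))) := by
        rw [hDz r, ← hu, mul_assoc]
        congr 1
        rw [← mul_assoc, cuhi.eq, mul_assoc, pow_two]
      rw [l1, l2, sq, mul_add u, mul_add hinv, mul_add z]
      congr 1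
      have l3 : hinv * (u * (h * (D + D + h))) = u * (D + D + h) := by
        rw [← mul_assoc u h, cuh.eq, mul_assoc, ← mul_assoc, hh2, one_mul]
      rw [l3, mul_add u, mul_add u, mul_add z, mul_add z]
      abel
    have PR : eA ((K : ℚ) + 1) * (D ^ (r + 1) * z)
        = ((K : ℚ) + 1) • (z * (u * D)) + ((K : ℚ) + 1) • (z * (u * h)) := by
      rw [hDz (r + 1), pow_succ, ← hu, mul_add u, mul_add z, ← Algebra.smul_def, smul_add]
    rw [hf]
    simp only [Fin.val_last, Fin.val_zero]
    rw [add_mul, add_mul, smul_mul_assoc, smul_mul_assoc, smul_mul_assoc,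
      mul_add, mul_add, mul_smul_comm, mul_smul_comm, mul_smul_comm,
      PX, P3, P4, P5, P6, PR]
    match_scalars
    all_goals
      first
        | ring1
        | linear_combination (-(K : ℚ) - 1) * hμd
        | linear_combination ((K : ℚ) + 1) * hμd
  -- scalar identity for claim 2
  have S2 : ∀ (i : Fin K) (r : ℕ),
      f i.castSucc * ((D + eA (1 - ((i.val : ℚ) + 1) / ((K : ℚ) + 1)) * h) ^ r)
        - ((D + eA (1 - ((i.val : ℚ) + 1) / ((K : ℚ) + 1)) * h) ^ r) * f i.succ
      = eA ((K : ℚ) + 1) * ((D + eA (1 - ((i.val : ℚ) + 1) / ((K : ℚ) + 1)) * h) ^ (r + 1)) := by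
    intro i r
    set lq : ℚ := 1 - ((i.val : ℚ) + 1) / ((K : ℚ) + 1) with hlq
    set W : A := D + eA lq * h with hW
    have cDh : Commute D h := (hcentral D).symm
    have ccen : ∀ (c : ℚ) (x : A), Commute (eA c) x := fun c x => Algebra.commutes c x
    have chx : ∀ x : A, Commute h x := fun x => hcentral x
    have chix : ∀ x : A, Commute hinv x := fun x => hcen' x
    have cWD : Commute W D := by
      rw [hW]
      exact (Commute.refl D).add_left ((ccen lq D).mul_left (chx D))
    have cWh : Commute W h := by
      rw [hW]
      exact cDh.add_left ((ccen lq h).mul_left (Commute.refl h))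
    have cWhi : Commute W hinv := by
      rw [hW]
      exact ((chix D).symm).add_left ((ccen lq hinv).mul_left ((chx hinv)))
    have cWf : Commute (W ^ r) (f i.succ) := by
      rw [hf]
      exact Commute.pow_left
        (((( cWhi.mul_right (cWD.pow_right 2)).smul_right _).add_right
          (cWD.smul_right _)).add_right (cWh.smul_right _)) r
    have main : f i.castSucc - f i.succ = eA ((K : ℚ) + 1) * W := by
      have expand : eA ((K : ℚ) + 1) * W
          = ((K : ℚ) + 1) • D + (((K : ℚ) + 1) * lq) • h := by
        rw [hW, mul_add, ← Algebra.smul_def, ← mul_assoc, ← _root_.map_mul,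
          ← Algebra.smul_def]
      rw [expand, hf]
      simp only [Fin.coe_castSucc, Fin.val_succ]
      push_cast
      match_scalars
      all_goals
        first
          | ring1
          | linear_combination ((K : ℚ) + 1) * hμ1 i
          | linear_combination (-(K : ℚ) - 1) * hμ1 i
    calc f i.castSucc * W ^ r - W ^ r * f i.succ
        = f i.castSucc * W ^ r - f i.succ * W ^ r := by rw [cWf.eq]
      _ = (f i.castSucc - f i.succ) * W ^ r := (sub_mul _ _ _).symm
      _ = eA ((K : ℚ) + 1) * W * W ^ r := by rw [main]
      _ = eA ((K : ℚ) + 1) * W ^ (r + 1) := by rw [mul_assoc, ← pow_succ']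
  intro r
  constructor
  · induction r with
    | zero =>
      ext p q
      simp [hT, hZ1]
    | succ r ih =>
      rw [Function.iterate_succ_apply', ih]
      ext p q
      rw [Matrix.smul_apply, Matrix.of_apply]
      have hG : ∀ p q : Fin (K + 1), ((((K : ℚ) + 1) ^ r) • Matrix.of (fun i j =>
          D ^ r * z * eA (Matrix.single (Fin.last K) 0 1 i j))) p q
          = (eA (((K : ℚ) + 1) ^ r) * (D ^ r * z))
            * eA (Matrix.single (Fin.last K) 0 (1 : ℚ) p q) := by
        intro p q
        simp [Algebra.smul_def, mul_assoc]
      rw [key _ _ _ _ hG p q]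
      have : f (Fin.last K) * (eA (((K : ℚ) + 1) ^ r) * (D ^ r * z))
          - (eA (((K : ℚ) + 1) ^ r) * (D ^ r * z)) * f 0
          = eA (((K : ℚ) + 1) ^ r) * (f (Fin.last K) * (D ^ r * z) - (D ^ r * z) * f 0) := by
        rw [mul_sub]
        congr 1
        · rw [← mul_assoc, ← Algebra.commutes (((K : ℚ) + 1) ^ r), heA, mul_assoc]
        · rw [mul_assoc]
      rw [this, S1 r, Algebra.smul_def, pow_succ ((K:ℚ)+1) r, _root_.map_mul]
      simp only [mul_assoc]
      rfl
  · intro i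
    induction r with
    | zero =>
      ext p q
      simp [hT, hZ0]
    | succ r ih =>
      rw [Function.iterate_succ_apply', ih]
      ext p q
      rw [Matrix.smul_apply, Matrix.of_apply]
      have hG : ∀ p q : Fin (K + 1), ((((K : ℚ) + 1) ^ r) • Matrix.of (fun p q =>
          (D + eA (1 - ((i.val : ℚ) + 1) / ((K : ℚ) + 1)) * h) ^ r *
            eA (Matrix.single i.castSucc i.succ 1 p q))) p q
          = (eA (((K : ℚ) + 1) ^ r) * ((D + eA (1 - ((i.val : ℚ) + 1) / ((K : ℚ) + 1)) * h) ^ r))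
            * eA (Matrix.single i.castSucc i.succ (1 : ℚ) p q) := by
        intro p q
        simp [Algebra.smul_def, mul_assoc]
      rw [key _ _ _ _ hG p q]
      have : f i.castSucc * (eA (((K : ℚ) + 1) ^ r) * ((D + eA (1 - ((i.val : ℚ) + 1) / ((K : ℚ) + 1)) * h) ^ r))
          - (eA (((K : ℚ) + 1) ^ r) * ((D + eA (1 - ((i.val : ℚ) + 1) / ((K : ℚ) + 1)) * h) ^ r)) * f i.succ
          = eA (((K : ℚ) + 1) ^ r) * (f i.castSucc * ((D + eA (1 - ((i.val : ℚ) + 1) / ((K : ℚ) + 1)) * h) ^ r)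
              - ((D + eA (1 - ((i.val : ℚ) + 1) / ((K : ℚ) + 1)) * h) ^ r) * f i.succ) := by
        rw [mul_sub]
        congr 1
        · rw [← mul_assoc, ← Algebra.commutes (((K : ℚ) + 1) ^ r), heA, mul_assoc]
        · rw [mul_assoc]
      rw [this, S2 i r, Algebra.smul_def, pow_succ ((K:ℚ)+1) r, _root_.map_mul]
      simp only [mul_assoc]
      rfl
end

section
/- In the universal central extension setting: let \mathfrak{b}^+ be the Lie algebra spanned by X u^m v^n with X \in \mathfrak{sl}_{K+1}, m \ge 1, n \ge 0, together with X v^n for X strictly upper triangular and n \ge 0, and central elements K_m[n] for m, n \ge 1, with bracket [X u^{m_1} v^{n_1}, Y u^{m_2} v^{n_2}] = [X,Y] u^{m_1+m_2} v^{n_1+n_2} + \langle X, Y\rangle (m_2 n_1 - m_1 n_2) K_{m_1+m_2}[n_1+n_2] (where \langle\cdot,\cdot\rangle is the Killing/trace form). Then the graded dimension of \mathfrak{b}^+ in dimension grading d and filtration degree r (induced by v-degree) equals: K if r = 0 and d \in \mathbb{Z}_{\ge1}\cdot\delta; K+1 if r \ge 1 and d \in \mathbb{Z}_{\ge1}\cdot\delta;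 1 if d is a positive real root of \widehat{\mathfrak{sl}}_{K+1}; and 0 otherwise. -/
open Finset Classical

/-- Validity of an index of a basis element `X u^m v^n` of `𝔟⁺ ⊂ ŝl_{K+1}[u^{±1}, v]`:
off-diagonal basis elements `E_{i,j}` (`i ≠ j`) require `m ≥ 1` or (`m = 0` and
`i < j`, i.e. `E_{i,j}` strictly upper triangular); diagonal basis elements
`h_i = E_{i,i} - E_{i+1,i+1}` require `m ≥ 1`. -/
def IdxValid (K : ℕ) (b : (Fin (K + 1) × Fin (K + 1)) ⊕ Fin K) (m : ℕ) : Prop :=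
  match b with
  | Sum.inl p => p.1 ≠ p.2 ∧ (1 ≤ m ∨ (m = 0 ∧ p.1 < p.2))
  | Sum.inr _ => 1 ≤ m

/-- The index set of the standard basis of `𝔟⁺`: elements `X u^m v^n` with `X` in the
standard basis of `sl_{K+1}`, together with the central elements `K_m[n]`
(`m, n ≥ 1`). -/
def Idx (K : ℕ) : Type :=
  { x : (((Fin (K + 1) × Fin (K + 1)) ⊕ Fin K) × ℕ × ℕ) // IdxValid K x.1 x.2.1 } ⊕
  { x : ℕ × ℕ // 1 ≤ x.1 ∧ 1 ≤ x.2 }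

/-- The `ℕ^{K+1}` dimension grading: `E_{i,j} u^m v^n` has degree `m·δ + (root of
`E_{i,j}`)`, diagonal elements and `K_m[n]` have degree `m·δ`. -/
def dimOf (K : ℕ) : Idx K → (Fin (K + 1) → ℕ)
  | Sum.inl ⟨(Sum.inl p, m, _), _⟩ => fun k =>
      if p.1 < p.2 then m + (if p.1 ≤ k ∧ k < p.2 then 1 else 0)
      else m - (if p.2 ≤ k ∧ k < p.1 then 1 else 0)
  | Sum.inl ⟨(Sum.inr _, m, _), _⟩ => fun _ => m
  | Sum.inr ⟨(m, _), _⟩ => fun _ => m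

/-- The filtration degree (degree in `v`). -/
def vdeg (K : ℕ) : Idx K → ℕ
  | Sum.inl ⟨(_, _, nn), _⟩ => nn
  | Sum.inr ⟨(_, nn), _⟩ => nn

/-- The Tits quadratic form of the cyclic quiver with `K+1` vertices; `d ≠ 0` is a
positive real root of `ŝl_{K+1}` iff `qform K d = 1`, and a positive imaginary root
iff `qform K d = 0`, i.e. `d ∈ ℤ_{≥1}·δ`. -/
def qform (K : ℕ) (d : Fin (K + 1) → ℕ) : ℤ :=
  (∑ i, (d i : ℤ) ^ 2) - ∑ i : Fin (K + 1), (d i : ℤ) * (d (i + 1) : ℤ)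

namespace S17

@[simp] lemma fin_val_mk {n t : ℕ} (h : t < n) : ((⟨t, h⟩ : Fin n) : ℕ) = t := rfl

lemma sum_shift {K : ℕ} (f : Fin (K+1) → ℤ) : ∑ c : Fin (K+1), f (c+1) = ∑ c, f c :=
  Fintype.sum_equiv (Equiv.addRight 1) _ _ (fun _ => rfl)

def df (K : ℕ) (d : Fin (K+1) → ℕ) (c : Fin (K+1)) : ℤ := (d (c+1) : ℤ) - (d c : ℤ)

lemma df_sum {K : ℕ} (d : Fin (K+1) → ℕ) : ∑ c, df K d c = 0 := by
  unfold df
  rw [Finset.sum_sub_distrib, sum_shift (fun c => (d c : ℤ)), sub_self]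

lemma qform_double {K : ℕ} (d : Fin (K+1) → ℕ) :
    ∑ c, (df K d c)^2 = 2 * qform K d := by
  have h1 : ∑ c : Fin (K+1), ((d (c+1) : ℤ))^2 = ∑ c, (d c : ℤ)^2 :=
    sum_shift (fun c => (d c : ℤ)^2)
  have h2 : ∑ c : Fin (K+1), (df K d c)^2
      = ∑ c : Fin (K+1), (((d (c+1):ℤ))^2 + (d c:ℤ)^2 - 2 * ((d c : ℤ) * (d (c+1):ℤ))) := by
    apply Finset.sum_congr rfl; intros; unfold df; ring
  rw [h2, Finset.sum_sub_distrib, Finset.sum_add_distrib, h1, ← Finset.mul_sum]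
  unfold qform
  ring

def jmp {K : ℕ} (a b c : Fin (K+1)) : ℤ := if c = a then 1 else if c = b then -1 else 0

lemma sum_jmp_sq {K : ℕ} (a b : Fin (K+1)) (hab : a ≠ b) :
    ∑ c : Fin (K+1), (jmp a b c)^2 = 2 := by
  have h : ∀ c : Fin (K+1),
      (jmp a b c)^2 = (if c = a then (1:ℤ) else 0) + (if c = b then 1 else 0) := by
    intro c
    by_cases h1 : c = a <;> by_cases h2 : c = b
    · exact absurd (h1 ▸ h2) hab
    all_goals simp [jmp, h1, h2, hab, Ne.symm hab]
  rw [Finset.sum_congr rfl (fun c _ => h c), Finset.sum_add_distrib]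
  simp

lemma jumps_of_sum {K : ℕ} (e : Fin (K+1) → ℤ) (h0 : ∑ c, e c = 0)
    (h2 : ∑ c, e c ^ 2 = 2) : ∃ a b, a ≠ b ∧ ∀ c, e c = jmp a b c := by
  classical
  have hb : ∀ c : Fin (K+1), e c ^ 2 ≤ 2 := by
    intro c
    calc e c ^ 2 ≤ ∑ x : Fin (K+1), e x ^ 2 :=
      Finset.single_le_sum (fun x _ => sq_nonneg (e x)) (mem_univ c)
    _ = 2 := h2
  have hval : ∀ c, -1 ≤ e c ∧ e c ≤ 1 := by
    intro c; constructor <;> nlinarith [hb c]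
  set s : Finset (Fin (K+1)) := univ.filter (fun c => e c ≠ 0) with hs
  have hsub : ∀ x ∈ (univ : Finset (Fin (K+1))), x ∉ s → e x ^ 2 = 0 := by
    intro x _ hx
    simp only [hs, mem_filter, mem_univ, true_and, not_not] at hx
    simp [hx]
  have hsum2 : ∑ c ∈ s, e c ^ 2 = 2 := by
    rw [Finset.sum_subset (filter_subset _ _) hsub, h2]
  have hterms : ∀ c ∈ s, e c ^ 2 = 1 := by
    intro c hc
    simp only [hs, mem_filter, mem_univ, true_and] at hc
    obtain ⟨hl, hr⟩ := hval c
    have h1 : e c = 1 ∨ e c = -1 := by omega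
    rcases h1 with h1 | h1 <;> rw [h1] <;> ring
  have hcard : s.card = 2 := by
    have h3 : ∑ c ∈ s, e c ^2 = (s.card : ℤ) := by
      rw [Finset.sum_congr rfl hterms]; simp
    rw [hsum2] at h3
    exact_mod_cast h3.symm
  obtain ⟨a, b, hab, hs2⟩ := Finset.card_eq_two.mp hcard
  have hea : e a ≠ 0 := by
    have : a ∈ s := by rw [hs2]; simp
    simpa [hs] using this
  have heb : e b ≠ 0 := by
    have : b ∈ s := by rw [hs2]; simp
    simpa [hs] using this
  have hzero : ∀ c, c ≠ a → c ≠ b → e c = 0 := by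
    intro c hca hcb
    by_contra h
    have hc : c ∈ s := by simp [hs, h]
    rw [hs2] at hc
    simp only [mem_insert, mem_singleton] at hc
    tauto
  have hsum_ab : e a + e b = 0 := by
    have h4 : ∑ c ∈ s, e c = 0 := by
      rw [Finset.sum_subset (filter_subset _ _) ?_, h0]
      intro x _ hx
      simp only [hs, mem_filter, mem_univ, true_and, not_not] at hx
      exact hx
    rw [hs2, Finset.sum_pair hab] at h4
    exact h4
  obtain ⟨hal, har⟩ := hval a
  obtain ⟨hbl, hbr⟩ := hval b
  have hcase : (e a = 1 ∧ e b = -1) ∨ (e a = -1 ∧ e b = 1) := by omega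
  rcases hcase with ⟨h1, h2'⟩ | ⟨h1, h2'⟩
  · refine ⟨a, b, hab, fun c => ?_⟩
    by_cases hca : c = a
    · subst hca; simp [jmp, h1]
    · by_cases hcb : c = b
      · subst hcb; simp [jmp, hca, h2']
      · simp [jmp, hca, hcb, hzero c hca hcb]
  · refine ⟨b, a, hab.symm, fun c => ?_⟩
    by_cases hcb : c = b
    · subst hcb; simp [jmp, Ne.symm hab, h2']
    · by_cases hca : c = a
      · subst hca; simp [jmp, hcb, h1]
      · simp [jmp, hca, hcb, hzero c hca hcb]
lemma lin {K : ℕ} (d : Fin (K+1) → ℕ) (a b : Fin (K+1)) (hab : a ≠ b)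
    (he : ∀ c : Fin (K+1), (d (c+1) : ℤ) - (d c : ℤ) = jmp a b c) :
    ∀ t : ℕ, ∀ ht : t < K + 1, (d ⟨t, ht⟩ : ℤ) =
      (d ⟨0, Nat.succ_pos K⟩ : ℤ) + (if (a : ℕ) < t then 1 else 0)
        - (if (b : ℕ) < t then 1 else 0) := by
  have hne : (a : ℕ) ≠ (b : ℕ) := fun h => hab (Fin.ext h)
  intro t
  induction t with
  | zero => intro ht; simp
  | succ t ih =>
    intro ht
    have ht' : t < K + 1 := by omega
    have hstep := he ⟨t, ht'⟩
    have hfin : (⟨t, ht'⟩ : Fin (K+1)) + 1 = ⟨t+1, ht⟩ := by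
      apply Fin.ext
      have h1 : (1 : Fin (K+1)).val = 1 % (K+1) := Fin.val_one' (K+1)
      simp [Fin.add_def, h1, Nat.mod_eq_of_lt ht]
    rw [hfin] at hstep
    have hih := ih ht'
    simp only [jmp, Fin.ext_iff, fin_val_mk] at hstep
    split_ifs at hstep hih ⊢ <;> omega

lemma lin' {K : ℕ} (d : Fin (K+1) → ℕ) (a b : Fin (K+1)) (hab : a ≠ b)
    (he : ∀ c : Fin (K+1), (d (c+1) : ℤ) - (d c : ℤ) = jmp a b c) (k : Fin (K+1)) :
    (d k : ℤ) = (d ⟨0, Nat.succ_pos K⟩ : ℤ) + (if (a : ℕ) < (k : ℕ) then 1 else 0)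
        - (if (b : ℕ) < (k : ℕ) then 1 else 0) := by
  have h := lin d a b hab he k.val k.isLt
  simpa using h

def patAdd (K : ℕ) (i j : Fin (K+1)) (m : ℕ) : Fin (K+1) → ℕ :=
  fun k => m + (if i ≤ k ∧ k < j then 1 else 0)

def patSub (K : ℕ) (i j : Fin (K+1)) (m : ℕ) : Fin (K+1) → ℕ :=
  fun k => m - (if j ≤ k ∧ k < i then 1 else 0)

lemma val_add_one {K : ℕ} (c : Fin (K+1)) :
    ((c + 1 : Fin (K+1)) : ℕ) = if (c : ℕ) = K then 0 else (c : ℕ) + 1 := by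
  rcases eq_or_ne c (Fin.last K) with h | h
  · subst h; simp [Fin.last_add_one, Fin.val_last]
  · have h2 : (c : ℕ) ≠ K := fun hh => h (Fin.ext (by simp [hh, Fin.val_last]))
    have h3 : c < Fin.last K := by
      rw [Fin.lt_def, Fin.val_last]
      have := c.isLt; omega
    rw [if_neg h2, Fin.val_add_one_of_lt h3]

lemma patAdd_jumps {K : ℕ} (i j : Fin (K+1)) (m : ℕ) (hij : i < j) :
    ∃ a b : Fin (K+1), a ≠ b ∧
      ∀ c, (patAdd K i j m (c+1) : ℤ) - (patAdd K i j m c : ℤ) = jmp a b c := by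
  rw [Fin.lt_def] at hij
  have hjK := j.isLt
  have hiK := i.isLt
  by_cases h0 : (i : ℕ) = 0
  · refine ⟨⟨K, by omega⟩, ⟨(j : ℕ) - 1, by omega⟩, by
      simp only [ne_eq, Fin.ext_iff, fin_val_mk]; omega, fun c => ?_⟩
    have hcv := val_add_one c
    have hcK := c.isLt
    simp only [patAdd, jmp, Fin.ext_iff, Fin.le_def, Fin.lt_def, fin_val_mk, hcv]
    split_ifs <;> omega
  · refine ⟨⟨(i : ℕ) - 1, by omega⟩, ⟨(j : ℕ) - 1, by omega⟩, by
      simp only [ne_eq, Fin.ext_iff, fin_val_mk]; omega, fun c => ?_⟩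
    have hcv := val_add_one c
    have hcK := c.isLt
    simp only [patAdd, jmp, Fin.ext_iff, Fin.le_def, Fin.lt_def, fin_val_mk, hcv]
    split_ifs <;> omega

lemma patSub_jumps {K : ℕ} (i j : Fin (K+1)) (m : ℕ) (hji : j < i) (hm : 1 ≤ m) :
    ∃ a b : Fin (K+1), a ≠ b ∧
      ∀ c, (patSub K i j m (c+1) : ℤ) - (patSub K i j m c : ℤ) = jmp a b c := by
  rw [Fin.lt_def] at hji
  have hjK := j.isLt
  have hiK := i.isLt
  by_cases h0 : (j : ℕ) = 0
  · refine ⟨⟨(i : ℕ) - 1, by omega⟩, ⟨K, by omega⟩, by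
      simp only [ne_eq, Fin.ext_iff, fin_val_mk]; omega, fun c => ?_⟩
    have hcv := val_add_one c
    have hcK := c.isLt
    simp only [patSub, jmp, Fin.ext_iff, Fin.le_def, Fin.lt_def, fin_val_mk, hcv]
    split_ifs <;> omega
  · refine ⟨⟨(i : ℕ) - 1, by omega⟩, ⟨(j : ℕ) - 1, by omega⟩, by
      simp only [ne_eq, Fin.ext_iff, fin_val_mk]; omega, fun c => ?_⟩
    have hcv := val_add_one c
    have hcK := c.isLt
    simp only [patSub, jmp, Fin.ext_iff, Fin.le_def, Fin.lt_def, fin_val_mk, hcv]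
    split_ifs <;> omega
lemma rep_of_jumps {K : ℕ} (d : Fin (K+1) → ℕ) (a b : Fin (K+1)) (hab : a ≠ b)
    (he : ∀ c : Fin (K+1), (d (c+1) : ℤ) - (d c : ℤ) = jmp a b c) :
    (∃ i j m, i < j ∧ d = patAdd K i j m) ∨
    (∃ i j m, j < i ∧ 1 ≤ m ∧ d = patSub K i j m) := by
  have hl := lin' d a b hab he
  have haK := a.isLt
  have hbK := b.isLt
  have hne : (a : ℕ) ≠ (b : ℕ) := fun h => hab (Fin.ext h)
  rcases Nat.lt_or_ge (a : ℕ) (b : ℕ) with hab' | hab'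
  · rcases Nat.lt_or_ge (b : ℕ) K with hbK' | hbK'
    · refine Or.inl ⟨⟨(a : ℕ)+1, by omega⟩, ⟨(b : ℕ)+1, by omega⟩, d ⟨0, Nat.succ_pos K⟩,
        by rw [Fin.lt_def]; simp; omega, ?_⟩
      funext k
      have hk := hl k
      have hkK := k.isLt
      simp only [patAdd, Fin.le_def, Fin.lt_def, fin_val_mk]
      split_ifs at hk ⊢ <;> omega
    · refine Or.inr ⟨⟨(a : ℕ)+1, by omega⟩, ⟨0, by omega⟩, d ⟨0, Nat.succ_pos K⟩ + 1,
        by rw [Fin.lt_def]; simp, by omega, ?_⟩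
      funext k
      have hk := hl k
      have hkK := k.isLt
      simp only [patSub, Fin.le_def, Fin.lt_def, fin_val_mk]
      split_ifs at hk ⊢ <;> omega
  · have hba : (b : ℕ) < (a : ℕ) := by omega
    have hb1 := hl ⟨(b : ℕ)+1, by omega⟩
    simp only [fin_val_mk] at hb1
    rcases Nat.lt_or_ge (a : ℕ) K with haK' | haK'
    · refine Or.inr ⟨⟨(a : ℕ)+1, by omega⟩, ⟨(b : ℕ)+1, by omega⟩, d ⟨0, Nat.succ_pos K⟩,
        by rw [Fin.lt_def]; simp; omega, by split_ifs at hb1 <;> omega, ?_⟩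
      funext k
      have hk := hl k
      have hkK := k.isLt
      simp only [patSub, Fin.le_def, Fin.lt_def, fin_val_mk]
      split_ifs at hk ⊢ <;> omega
    · have hd0 : 1 ≤ d ⟨0, Nat.succ_pos K⟩ := by split_ifs at hb1 <;> omega
      refine Or.inl ⟨⟨0, by omega⟩, ⟨(b : ℕ)+1, by omega⟩, d ⟨0, Nat.succ_pos K⟩ - 1,
        by rw [Fin.lt_def]; simp, ?_⟩
      funext k
      have hk := hl k
      have hkK := k.isLt
      simp only [patAdd, Fin.le_def, Fin.lt_def, fin_val_mk]
      split_ifs at hk ⊢ <;> omega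

lemma patAdd_inj {K : ℕ} {i j i' j' : Fin (K+1)} {m m' : ℕ}
    (hij : i < j) (hij' : i' < j')
    (h : patAdd K i j m = patAdd K i' j' m') : i = i' ∧ j = j' ∧ m = m' := by
  rw [Fin.lt_def] at hij hij'
  have hjK := j.isLt; have hjK' := j'.isLt
  have e1 := congrFun h ⟨K, by omega⟩
  have e2 := congrFun h i
  have e3 := congrFun h i'
  have e4 := congrFun h j
  have e5 := congrFun h j'
  simp only [patAdd, Fin.le_def, Fin.lt_def, fin_val_mk] at e1 e2 e3 e4 e5
  have hm : m = m' := by split_ifs at e1 <;> omega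
  have hi : (i : ℕ) = (i' : ℕ) := by split_ifs at e2 e3 <;> omega
  have hj : (j : ℕ) = (j' : ℕ) := by split_ifs at e4 e5 <;> omega
  exact ⟨Fin.ext hi, Fin.ext hj, hm⟩

lemma patSub_inj {K : ℕ} {i j i' j' : Fin (K+1)} {m m' : ℕ}
    (hji : j < i) (hji' : j' < i') (hm : 1 ≤ m) (hm' : 1 ≤ m')
    (h : patSub K i j m = patSub K i' j' m') : i = i' ∧ j = j' ∧ m = m' := by
  rw [Fin.lt_def] at hji hji'
  have hiK := i.isLt; have hiK' := i'.isLt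
  have e1 := congrFun h ⟨K, by omega⟩
  have e2 := congrFun h i
  have e3 := congrFun h i'
  have e4 := congrFun h j
  have e5 := congrFun h j'
  simp only [patSub, Fin.le_def, Fin.lt_def, fin_val_mk] at e1 e2 e3 e4 e5
  have hm : m = m' := by split_ifs at e1 <;> omega
  have hj : (j : ℕ) = (j' : ℕ) := by split_ifs at e4 e5 <;> omega
  have hi : (i : ℕ) = (i' : ℕ) := by split_ifs at e2 e3 <;> omega
  exact ⟨Fin.ext hi, Fin.ext hj, hm⟩

lemma patAdd_ne_patSub {K : ℕ} {i j i' j' : Fin (K+1)} {m m' : ℕ}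
    (hij : i < j) (hji' : j' < i') (hm' : 1 ≤ m') :
    patAdd K i j m ≠ patSub K i' j' m' := by
  intro h
  rw [Fin.lt_def] at hij hji'
  have hjK := j.isLt; have hiK' := i'.isLt
  have e1 := congrFun h ⟨K, by omega⟩
  have e2 := congrFun h i
  simp only [patAdd, patSub, Fin.le_def, Fin.lt_def, fin_val_mk] at e1 e2
  split_ifs at e1 e2 <;> omega

lemma patAdd_ne_zero {K : ℕ} {i j : Fin (K+1)} {m : ℕ} (hij : i < j) :
    patAdd K i j m ≠ 0 := by
  intro h
  rw [Fin.lt_def] at hij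
  have := congrFun h i
  simp only [patAdd, Pi.zero_apply, Fin.le_def, Fin.lt_def] at this
  split_ifs at this <;> omega

lemma patSub_ne_zero {K : ℕ} {i j : Fin (K+1)} {m : ℕ} (hm : 1 ≤ m) :
    patSub K i j m ≠ 0 := by
  intro h
  have hiK := i.isLt
  have := congrFun h ⟨K, by omega⟩
  simp only [patSub, Pi.zero_apply, Fin.le_def, Fin.lt_def, fin_val_mk] at this
  split_ifs at this <;> omega

lemma patAdd_ne_const {K : ℕ} {i j : Fin (K+1)} {m l : ℕ} (hij : i < j) :
    patAdd K i j m ≠ fun _ => l := by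
  intro h
  rw [Fin.lt_def] at hij
  have hjK := j.isLt
  have h1 := congrFun h i
  have h2 := congrFun h ⟨K, by omega⟩
  simp only [patAdd, Fin.le_def, Fin.lt_def, fin_val_mk] at h1 h2
  split_ifs at h1 h2 <;> omega

lemma patSub_ne_const {K : ℕ} {i j : Fin (K+1)} {m l : ℕ} (hji : j < i) (hm : 1 ≤ m) :
    patSub K i j m ≠ fun _ => l := by
  intro h
  rw [Fin.lt_def] at hji
  have hiK := i.isLt
  have h1 := congrFun h j
  have h2 := congrFun h ⟨K, by omega⟩
  simp only [patSub, Fin.le_def, Fin.lt_def, fin_val_mk] at h1 h2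
  split_ifs at h1 h2 <;> omega

lemma qform_patAdd {K : ℕ} {i j : Fin (K+1)} {m : ℕ} (hij : i < j) :
    qform K (patAdd K i j m) = 1 := by
  obtain ⟨a, b, hab, hj⟩ := patAdd_jumps i j m hij
  have h1 : ∑ c, (df K (patAdd K i j m) c)^2 = 2 := by
    rw [Finset.sum_congr rfl (fun c _ => by rw [show df K (patAdd K i j m) c = jmp a b c from hj c])]
    exact sum_jmp_sq a b hab
  have h2 := qform_double (patAdd K i j m)
  omega

lemma qform_patSub {K : ℕ} {i j : Fin (K+1)} {m : ℕ} (hji : j < i) (hm : 1 ≤ m) :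
    qform K (patSub K i j m) = 1 := by
  obtain ⟨a, b, hab, hj⟩ := patSub_jumps i j m hji hm
  have h1 : ∑ c, (df K (patSub K i j m) c)^2 = 2 := by
    rw [Finset.sum_congr rfl (fun c _ => by rw [show df K (patSub K i j m) c = jmp a b c from hj c])]
    exact sum_jmp_sq a b hab
  have h2 := qform_double (patSub K i j m)
  omega

end S17


lemma dimOf_pat {K : ℕ} (i j : Fin (K+1)) (m n : ℕ) (hval : IdxValid K (Sum.inl (i,j)) m) :
    dimOf K (Sum.inl ⟨(Sum.inl (i,j), m, n), hval⟩) =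
      if i < j then S17.patAdd K i j m else S17.patSub K i j m := by
  by_cases h : i < j <;> funext k <;> simp [dimOf, S17.patAdd, S17.patSub, h]

/-- The graded dimension of `𝔟⁺` (the positive half of the universal
central extension of `sl_{K+1}[u^{±1}, v]`, with basis `X u^m v^n` and central
elements `K_m[n]` as indexed by `Idx K`) in dimension grading `d` and filtration
degree `r` equals: `K` if `r = 0` and `d ∈ ℤ_{≥1}·δ`; `K+1` if `r ≥ 1` and
`d ∈ ℤ_{≥1}·δ`; `1` if `d` is a positive real root of `ŝl_{K+1}`; and `0` otherwise. -/
theorem stmt_17 (K : ℕ) (hK : 1 ≤ K) (d : Fin (K + 1) → ℕ) (r : ℕ) :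
    Nat.card { x : Idx K // dimOf K x = d ∧ vdeg K x = r } =
      if ∃ l : ℕ, 1 ≤ l ∧ d = fun _ => l then (if r = 0 then K else K + 1)
      else if d ≠ 0 ∧ qform K d = 1 then 1
      else 0 := by
  by_cases hconst : ∃ l : ℕ, 1 ≤ l ∧ d = fun _ => l
  · rw [if_pos hconst]
    obtain ⟨l, hl, hd⟩ := hconst
    subst hd
    by_cases hr : r = 0
    · rw [if_pos hr]
      subst hr
      have hf : Function.Bijective (fun t : Fin K =>
          (⟨Sum.inl ⟨(Sum.inr t, l, 0), hl⟩, rfl, rfl⟩ :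
            { x : Idx K // dimOf K x = (fun _ => l) ∧ vdeg K x = 0 })) := by
        constructor
        · intro t t' h
          have h1 := congrArg Subtype.val h
          have h2 := congrArg Subtype.val (Sum.inl.inj h1)
          simp only [Prod.mk.injEq, Sum.inr.injEq] at h2
          exact h2.1
        · rintro ⟨x, hx1, hx2⟩
          rcases x with ⟨⟨⟨i,j⟩|t, m, n⟩, hval⟩ | ⟨⟨m,n⟩, hm1, hn1⟩
          · exfalso
            obtain ⟨hne, hor⟩ := hval
            rw [dimOf_pat i j m n ⟨hne, hor⟩] at hx1
            by_cases hij : i < j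
            · rw [if_pos hij] at hx1
              exact S17.patAdd_ne_const hij hx1
            · have hji : j < i := lt_of_le_of_ne (not_lt.mp hij) (Ne.symm hne)
              have hm : 1 ≤ m := by
                rcases hor with h|h
                · exact h
                · exact absurd h.2 hij
              rw [if_neg hij] at hx1
              exact S17.patSub_ne_const hji hm hx1
          · have hm : m = l := congrFun hx1 ⟨0, Nat.succ_pos K⟩
            have hn : n = 0 := hx2
            refine ⟨t, ?_⟩
            apply Subtype.ext
            subst hm; subst hn
            rfl
          · exfalso
            have hn0 : n = 0 := hx2
            omega
      rw [Nat.card_congr (Equiv.ofBijective _ hf).symm]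
      simp [Nat.card_eq_fintype_card]
    · rw [if_neg hr]
      have hrpos : 1 ≤ r := by omega
      have hf : Function.Bijective (fun o : Option (Fin K) =>
          (match o with
            | none => ⟨Sum.inr ⟨(l, r), hl, hrpos⟩, rfl, rfl⟩
            | some t => ⟨Sum.inl ⟨(Sum.inr t, l, r), hl⟩, rfl, rfl⟩ :
            { x : Idx K // dimOf K x = (fun _ => l) ∧ vdeg K x = r })) := by
        constructor
        · intro o o' h
          have h1 := congrArg Subtype.val h
          cases o <;> cases o'
          · rfl
          · simp at h1
          · simp at h1
          · have h2 := congrArg Subtype.val (Sum.inl.inj h1)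
            simp only [Prod.mk.injEq, Sum.inr.injEq] at h2
            rw [h2.1]
        · rintro ⟨x, hx1, hx2⟩
          rcases x with ⟨⟨⟨i,j⟩|t, m, n⟩, hval⟩ | ⟨⟨m,n⟩, hm1, hn1⟩
          · exfalso
            obtain ⟨hne, hor⟩ := hval
            rw [dimOf_pat i j m n ⟨hne, hor⟩] at hx1
            by_cases hij : i < j
            · rw [if_pos hij] at hx1
              exact S17.patAdd_ne_const hij hx1
            · have hji : j < i := lt_of_le_of_ne (not_lt.mp hij) (Ne.symm hne)
              have hm : 1 ≤ m := by
                rcases hor with h|h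
                · exact h
                · exact absurd h.2 hij
              rw [if_neg hij] at hx1
              exact S17.patSub_ne_const hji hm hx1
          · have hm : m = l := congrFun hx1 ⟨0, Nat.succ_pos K⟩
            have hn : n = r := hx2
            refine ⟨some t, ?_⟩
            apply Subtype.ext
            subst hm; subst hn
            rfl
          · have hm : m = l := congrFun hx1 ⟨0, Nat.succ_pos K⟩
            have hn : n = r := hx2
            refine ⟨none, ?_⟩
            apply Subtype.ext
            subst hm; subst hn
            rfl
      rw [Nat.card_congr (Equiv.ofBijective _ hf).symm]
      simp [Nat.card_eq_fintype_card]
  · rw [if_neg hconst]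
    by_cases hroot : d ≠ 0 ∧ qform K d = 1
    · rw [if_pos hroot]
      have h2 : ∑ c, (S17.df K d c)^2 = 2 := by
        rw [S17.qform_double, hroot.2]
        norm_num
      obtain ⟨a, b, hab, hjmp⟩ := S17.jumps_of_sum (S17.df K d) (S17.df_sum d) h2
      have hrep := S17.rep_of_jumps d a b hab (fun c => hjmp c)
      rw [Nat.card_eq_one_iff_unique]
      have key : ∀ z : Idx K, dimOf K z = d → vdeg K z = r →
          ∃ (i j : Fin (K+1)) (m : ℕ) (hval : IdxValid K (Sum.inl (i,j)) m),
            z = Sum.inl ⟨(Sum.inl (i,j), m, r), hval⟩ := by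
        rintro z hz1 hz2
        rcases z with ⟨⟨⟨i,j⟩|t, m, n⟩, hval⟩ | ⟨⟨m,n⟩, hm1, hn1⟩
        · have hn : n = r := hz2
          subst hn
          exact ⟨i, j, m, hval, rfl⟩
        · exact absurd ⟨m, hval, hz1.symm⟩ hconst
        · exact absurd ⟨m, hm1, hz1.symm⟩ hconst
      constructor
      · constructor
        rintro ⟨x, hx1, hx2⟩ ⟨y, hy1, hy2⟩
        obtain ⟨i, j, m, hv, hx⟩ := key x hx1 hx2
        obtain ⟨i', j', m', hv', hy⟩ := key y hy1 hy2
        apply Subtype.ext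
        show x = y
        rw [hx, hy]
        have hdx : (if i < j then S17.patAdd K i j m else S17.patSub K i j m) = d := by
          rw [← dimOf_pat i j m r hv, ← hx]; exact hx1
        have hdy : (if i' < j' then S17.patAdd K i' j' m' else S17.patSub K i' j' m') = d := by
          rw [← dimOf_pat i' j' m' r hv', ← hy]; exact hy1
        have hpq := hdx.trans hdy.symm
        obtain ⟨hne, hor⟩ := hv
        obtain ⟨hne', hor'⟩ := hv'
        by_cases hij : i < j <;> by_cases hij' : i' < j'
        · rw [if_pos hij, if_pos hij'] at hpq
          obtain ⟨e1, e2, e3⟩ := S17.patAdd_inj hij hij' hpq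
          subst e1; subst e2; subst e3; rfl
        · have hji' : j' < i' := lt_of_le_of_ne (not_lt.mp hij') (Ne.symm hne')
          have hm' : 1 ≤ m' := by
            rcases hor' with h|h
            · exact h
            · exact absurd h.2 hij'
          rw [if_pos hij, if_neg hij'] at hpq
          exact absurd hpq (S17.patAdd_ne_patSub hij hji' hm')
        · have hji : j < i := lt_of_le_of_ne (not_lt.mp hij) (Ne.symm hne)
          have hm : 1 ≤ m := by
            rcases hor with h|h
            · exact h
            · exact absurd h.2 hij
          rw [if_neg hij, if_pos hij'] at hpq
          exact absurd hpq.symm (S17.patAdd_ne_patSub hij' hji hm)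
        · have hji : j < i := lt_of_le_of_ne (not_lt.mp hij) (Ne.symm hne)
          have hji' : j' < i' := lt_of_le_of_ne (not_lt.mp hij') (Ne.symm hne')
          have hm : 1 ≤ m := by
            rcases hor with h|h
            · exact h
            · exact absurd h.2 hij
          have hm' : 1 ≤ m' := by
            rcases hor' with h|h
            · exact h
            · exact absurd h.2 hij'
          rw [if_neg hij, if_neg hij'] at hpq
          obtain ⟨e1, e2, e3⟩ := S17.patSub_inj hji hji' hm hm' hpq
          subst e1; subst e2; subst e3; rfl
      · rcases hrep with ⟨i, j, m, hij, hd⟩ | ⟨i, j, m, hji, hm, hd⟩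
        · refine ⟨⟨Sum.inl ⟨(Sum.inl (i,j), m, r), ⟨ne_of_lt hij, ?_⟩⟩, ?_, rfl⟩⟩
          · rcases Nat.eq_zero_or_pos m with h|h
            · exact Or.inr ⟨h, hij⟩
            · exact Or.inl h
          · exact (dimOf_pat i j m r _).trans (by rw [if_pos hij]; exact hd.symm)
        · refine ⟨⟨Sum.inl ⟨(Sum.inl (i,j), m, r), ⟨Ne.symm (ne_of_lt hji), Or.inl hm⟩⟩, ?_, rfl⟩⟩
          exact (dimOf_pat i j m r _).trans (by rw [if_neg (not_lt.mpr (le_of_lt hji))]; exact hd.symm)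
    · rw [if_neg hroot]
      have he : IsEmpty {x : Idx K // dimOf K x = d ∧ vdeg K x = r} := by
        constructor
        rintro ⟨z, hz1, hz2⟩
        rcases z with ⟨⟨⟨i,j⟩|t, m, n⟩, hval⟩ | ⟨⟨m,n⟩, hm1, hn1⟩
        · obtain ⟨hne, hor⟩ := hval
          rw [dimOf_pat i j m n ⟨hne, hor⟩] at hz1
          by_cases hij : i < j
          · rw [if_pos hij] at hz1
            exact hroot ⟨by rw [← hz1]; exact S17.patAdd_ne_zero hij,
              by rw [← hz1]; exact S17.qform_patAdd hij⟩
          · have hji : j < i := lt_of_le_of_ne (not_lt.mp hij) (Ne.symm hne)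
            have hm : 1 ≤ m := by
              rcases hor with h|h
              · exact h
              · exact absurd h.2 hij
            rw [if_neg hij] at hz1
            exact hroot ⟨by rw [← hz1]; exact S17.patSub_ne_zero hm,
              by rw [← hz1]; exact S17.qform_patSub hji hm⟩
        · exact hconst ⟨m, hval, hz1.symm⟩
        · exact hconst ⟨m, hm1, hz1.symm⟩
      exact Nat.card_of_isEmpty
end
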